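/- arXiv:2302.05707 — 5 statements merged into one kernel-verified Lean document; each statement's English description precedes it below -/
import Mathlib

section
/- Let X be a random variable with range (\{0,1\}^\lambda)^n that is (1-\delta)-dense, i.e., for every subset I \subseteq [n], the min-entropy of the restriction X_I satisfies H_\infty(X_I) \geq (1-\delta)·|I|·\lambda. If X' is an independent copy of X and C = |\{i \in [n] : X_i = X'_i\}|, then for every c, Pr[C = c] \leq 2^{c·(-(1-\delta)\lambda + \log_2 n)}. -/
/-- A `(1-δ)`-dense source over `({0,1}^λ)^n`: for every subset `I` of coordinates and
every candidate value, the probability that the restriction to `I` matches is at most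
`2^{-(1-δ)|I|λ}` (equivalently `H∞(X_I) ≥ (1-δ)|I|λ`).  If `X'` is an independent copy
of `X` and `C` counts the collision coordinates, then
`Pr[C = c] ≤ 2^{c·(-(1-δ)λ + log₂ n)}`. -/
theorem stmt_0 {n lam : ℕ} (δ : ℝ)
    (p : (Fin n → (Fin lam → Bool)) → ℝ)
    (hp : ∀ x, 0 ≤ p x) (hsum : ∑ x, p x = 1)
    (hdense : ∀ (I : Finset (Fin n)) (v : Fin n → (Fin lam → Bool)),
      (∑ x, if ∀ i ∈ I, x i = v i then p x else 0)
        ≤ (2 : ℝ) ^ (-((1 - δ) * I.card * lam)))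
    (c : ℕ) :
    (∑ x, ∑ y, if (Finset.univ.filter (fun i => x i = y i)).card = c
        then p x * p y else 0)
      ≤ (2 : ℝ) ^ ((c : ℝ) * (-(1 - δ) * lam + Real.logb 2 n)) := by
  classical
  set P := Finset.powersetCard c (Finset.univ : Finset (Fin n)) with hP
  have hterm_nonneg : ∀ (x y : Fin n → Fin lam → Bool) (I : Finset (Fin n)),
      (0:ℝ) ≤ (if ∀ i ∈ I, x i = y i then p x * p y else 0) := by
    intro x y I
    split
    · exact mul_nonneg (hp x) (hp y)
    · exact le_refl 0
  -- step 1: pointwise bound by sum over size-c subsets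
  have key : ∀ x y : Fin n → Fin lam → Bool,
      (if (Finset.univ.filter (fun i => x i = y i)).card = c then p x * p y else 0)
      ≤ ∑ I ∈ P, (if ∀ i ∈ I, x i = y i then p x * p y else 0) := by
    intro x y
    by_cases h : (Finset.univ.filter (fun i => x i = y i)).card = c
    · simp only [h, if_true]
      have hmem : (Finset.univ.filter (fun i => x i = y i)) ∈ P := by
        simp [hP, Finset.mem_powersetCard, h]
      have hs := Finset.single_le_sum (f := fun I => if ∀ i ∈ I, x i = y i then p x * p y else 0)
        (fun I _ => hterm_nonneg x y I) hmem
      have heq : (if ∀ i ∈ (Finset.univ.filter (fun i => x i = y i)), x i = y i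
          then p x * p y else 0) = p x * p y := by
        rw [if_pos]
        intro i hi
        exact (Finset.mem_filter.mp hi).2
      exact le_of_eq_of_le heq.symm (by simpa using hs)
    · simp only [h, if_false]
      exact Finset.sum_nonneg (fun I _ => hterm_nonneg x y I)
  have step1 : (∑ x, ∑ y, if (Finset.univ.filter (fun i => x i = y i)).card = c
        then p x * p y else 0)
      ≤ ∑ I ∈ P, ∑ y, ∑ x, (if ∀ i ∈ I, x i = y i then p x * p y else 0) := by
    calc (∑ x, ∑ y, if (Finset.univ.filter (fun i => x i = y i)).card = c
            then p x * p y else 0)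
        ≤ ∑ x, ∑ y, ∑ I ∈ P, (if ∀ i ∈ I, x i = y i then p x * p y else 0) := by
          exact Finset.sum_le_sum (fun x _ => Finset.sum_le_sum (fun y _ => key x y))
      _ = ∑ x, ∑ I ∈ P, ∑ y, (if ∀ i ∈ I, x i = y i then p x * p y else 0) :=
          Finset.sum_congr rfl fun x _ => Finset.sum_comm
      _ = ∑ I ∈ P, ∑ x, ∑ y, (if ∀ i ∈ I, x i = y i then p x * p y else 0) :=
          Finset.sum_comm
      _ = ∑ I ∈ P, ∑ y, ∑ x, (if ∀ i ∈ I, x i = y i then p x * p y else 0) :=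
          Finset.sum_congr rfl fun I _ => Finset.sum_comm
  -- step 2: bound inner double sum
  have step2 : ∀ I ∈ P, (∑ y, ∑ x, (if ∀ i ∈ I, x i = y i then p x * p y else 0))
      ≤ (2 : ℝ) ^ (-((1 - δ) * c * lam)) := by
    intro I hI
    have hcard : I.card = c := (Finset.mem_powersetCard.mp hI).2
    have hin : ∀ y, (∑ x, (if ∀ i ∈ I, x i = y i then p x * p y else 0))
        ≤ (2 : ℝ) ^ (-((1 - δ) * c * lam)) * p y := by
      intro y
      have : (∑ x, (if ∀ i ∈ I, x i = y i then p x * p y else 0))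
          = (∑ x, (if ∀ i ∈ I, x i = y i then p x else 0)) * p y := by
        rw [Finset.sum_mul]
        exact Finset.sum_congr rfl (fun x _ => by split <;> simp
)
      rw [this]
      have hd := hdense I y
      rw [hcard] at hd
      exact mul_le_mul_of_nonneg_right hd (hp y)
    calc (∑ y, ∑ x, (if ∀ i ∈ I, x i = y i then p x * p y else 0))
        ≤ ∑ y, (2 : ℝ) ^ (-((1 - δ) * c * lam)) * p y :=
          Finset.sum_le_sum (fun y _ => hin y)
      _ = (2 : ℝ) ^ (-((1 - δ) * c * lam)) := by
          rw [← Finset.mul_sum, hsum, mul_one]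
  have step3 : (∑ x, ∑ y, if (Finset.univ.filter (fun i => x i = y i)).card = c
        then p x * p y else 0)
      ≤ (n.choose c : ℝ) * (2 : ℝ) ^ (-((1 - δ) * c * lam)) := by
    calc _ ≤ ∑ I ∈ P, ∑ y, ∑ x, (if ∀ i ∈ I, x i = y i then p x * p y else 0) := step1
      _ ≤ ∑ _I ∈ P, (2 : ℝ) ^ (-((1 - δ) * c * lam)) := Finset.sum_le_sum step2
      _ = (n.choose c : ℝ) * (2 : ℝ) ^ (-((1 - δ) * c * lam)) := by
          rw [Finset.sum_const, hP, Finset.card_powersetCard, Finset.card_univ,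
            Fintype.card_fin, nsmul_eq_mul]
  refine step3.trans ?_
  -- final combinatorial bound
  rcases Nat.eq_zero_or_pos n with hn | hn
  · subst hn
    rcases Nat.eq_zero_or_pos c with hc | hc
    · subst hc
      simp
    · have : Nat.choose 0 c = 0 := Nat.choose_eq_zero_of_lt hc
      rw [this]
      push_cast
      rw [zero_mul]
      positivity
  · have hchoose : (n.choose c : ℝ) ≤ (n : ℝ) ^ c := by
      have h1 : n.choose c ≤ n.descFactorial c := Nat.choose_le_descFactorial n c
      have h2 : n.descFactorial c ≤ n ^ c := Nat.descFactorial_le_pow n c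
      exact_mod_cast h1.trans h2
    have hnpos : (0:ℝ) < n := by exact_mod_cast hn
    have hpow : (n : ℝ) ^ c = (2 : ℝ) ^ ((c : ℝ) * Real.logb 2 n) := by
      have h2 : (2 : ℝ) ^ (Real.logb 2 n) = (n : ℝ) :=
        Real.rpow_logb (by norm_num) (by norm_num) hnpos
      rw [mul_comm, Real.rpow_mul (by norm_num), h2, Real.rpow_natCast]
    calc (n.choose c : ℝ) * (2 : ℝ) ^ (-((1 - δ) * c * lam))
        ≤ (n : ℝ) ^ c * (2 : ℝ) ^ (-((1 - δ) * c * lam)) := by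
          exact mul_le_mul_of_nonneg_right hchoose (Real.rpow_nonneg (by norm_num) _)
      _ = (2 : ℝ) ^ ((c : ℝ) * Real.logb 2 n) * (2 : ℝ) ^ (-((1 - δ) * c * lam)) := by
          rw [hpow]
      _ = (2 : ℝ) ^ ((c : ℝ) * (-(1 - δ) * lam + Real.logb 2 n)) := by
          rw [← Real.rpow_add (by norm_num)]
          ring_nf
end

section
/- Block-wise leftover hash lemma: Let Y = (Y_1, ..., Y_t) be a random variable over (\{0,1\}^\lambda)^t that is (1-\delta)-dense, let \mathcal{G} be a family of universal hash functions from \{0,1\}^\lambda to \{0,1\}^{\lambda'}, let G = (G_1,...,G_t) be chosen uniformly and independently from \mathcal{G}^t (independent of Y), and let U be uniform over (\{0,1\}^{\lambda'})^t. If (1-\delta)\lambda > \lambda' + \log_2 t + 1, then the statistical distance between (G, (G_1(Y_1),...,G_t(Y_t))) and (G, U) is at most \sqrt{2^{-(1-\delta)\lambda + \lambda' + \log_2 t}}. -/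
open Finset

lemma lhl_pow_aux (e : ℝ) (he : 0 ≤ e) :
    ∀ t : ℕ, (t : ℝ) * e ≤ 1 / 2 → (1 + e) ^ t ≤ 1 + 2 * t * e := by
  intro t
  induction t with
  | zero => simp
  | succ n ih =>
    intro h
    have hcast : ((n + 1 : ℕ) : ℝ) = (n : ℝ) + 1 := by push_cast; ring
    rw [hcast] at h
    have hne : (n : ℝ) * e ≤ 1 / 2 := by nlinarith [Nat.cast_nonneg (α := ℝ) n]
    have h1 := ih hne
    have hpos : (0:ℝ) ≤ 1 + e := by linarith
    have h2 : (1 + e) ^ (n + 1) = (1 + e) ^ n * (1 + e) := by ring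
    rw [h2, hcast]
    nlinarith [mul_le_mul_of_nonneg_right h1 hpos]

lemma lhl_sum_one {t lam lam' : ℕ} {H : Type*} [Fintype H]
    (ev : H → (Fin lam → Bool) → (Fin lam' → Bool))
    (p : (Fin t → (Fin lam → Bool)) → ℝ) (hsum : ∑ y, p y = 1) (g : Fin t → H) :
    ∑ u : Fin t → (Fin lam' → Bool),
      (∑ y, if (∀ i, ev (g i) (y i) = u i) then p y else 0) = 1 := by
  classical
  rw [Finset.sum_comm, ← hsum]
  refine Finset.sum_congr rfl fun y _ => ?_
  have h1 : ∀ u : Fin t → (Fin lam' → Bool),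
      (∀ i, ev (g i) (y i) = u i) ↔ ((fun i => ev (g i) (y i)) = u) := by
    intro u; rw [funext_iff]
  simp only [h1]
  rw [Finset.sum_ite_eq]
  simp

set_option maxHeartbeats 1000000 in
lemma lhl_collision {t lam lam' : ℕ} {H : Type*} [Fintype H] [Nonempty H] (δ : ℝ)
    (ev : H → (Fin lam → Bool) → (Fin lam' → Bool))
    (huniv : ∀ x y : Fin lam → Bool, x ≠ y →
      ((Finset.univ.filter (fun g : H => ev g x = ev g y)).card : ℝ)
        ≤ (Fintype.card H : ℝ) * (2 : ℝ) ^ (-(lam' : ℝ)))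
    (p : (Fin t → (Fin lam → Bool)) → ℝ)
    (hp : ∀ y, 0 ≤ p y) (hsum : ∑ y, p y = 1)
    (hdense : ∀ (I : Finset (Fin t)) (v : Fin t → (Fin lam → Bool)),
      (∑ y, if ∀ i ∈ I, y i = v i then p y else 0)
        ≤ (2 : ℝ) ^ (-((1 - δ) * I.card * lam))) :
    ((Fintype.card H : ℝ) ^ t)⁻¹ * ∑ g : Fin t → H, ∑ u : Fin t → (Fin lam' → Bool),
        (∑ y, if (∀ i, ev (g i) (y i) = u i) then p y else 0) ^ 2
      ≤ ((2 : ℝ) ^ (-((1 - δ) * lam)) + (2 : ℝ) ^ (-(lam' : ℝ))) ^ t := by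
  classical
  set K : ℝ := (Fintype.card H : ℝ) with hKdef
  set β : ℝ := (2 : ℝ) ^ (-(lam' : ℝ)) with hβdef
  set γ : ℝ := (2 : ℝ) ^ (-((1 - δ) * lam)) with hγdef
  have hK0 : (0:ℝ) < K := by
    rw [hKdef]; exact_mod_cast Fintype.card_pos (α := H)
  have hβ0 : (0:ℝ) < β := Real.rpow_pos_of_pos two_pos _
  have hγ0 : (0:ℝ) < γ := Real.rpow_pos_of_pos two_pos _
  -- Step 1: collision expansion per g
  have step1 : ∀ g : Fin t → H,
      ∑ u : Fin t → (Fin lam' → Bool),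
        (∑ y, if (∀ i, ev (g i) (y i) = u i) then p y else 0) ^ 2
      = ∑ y, ∑ y', p y * p y' *
          (if ∀ i, ev (g i) (y' i) = ev (g i) (y i) then (1:ℝ) else 0) := by
    intro g
    simp only [sq, Finset.sum_mul_sum]
    rw [Finset.sum_comm]
    refine Finset.sum_congr rfl fun y _ => ?_
    rw [Finset.sum_comm]
    refine Finset.sum_congr rfl fun y' _ => ?_
    have h1 : ∀ u : Fin t → (Fin lam' → Bool),
        (∀ i, ev (g i) (y i) = u i) ↔ ((fun i => ev (g i) (y i)) = u) := by
      intro u; rw [funext_iff]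
    have h2 : ∀ u : Fin t → (Fin lam' → Bool),
        (∀ i, ev (g i) (y' i) = u i) ↔ ((fun i => ev (g i) (y' i)) = u) := by
      intro u; rw [funext_iff]
    simp only [h1, h2, ite_mul, zero_mul, mul_ite, mul_zero]
    rw [Finset.sum_ite_eq]
    simp only [Finset.mem_univ, if_true]
    have h3 : ((fun i => ev (g i) (y' i)) = (fun i => ev (g i) (y i)))
        ↔ ∀ i, ev (g i) (y' i) = ev (g i) (y i) := funext_iff
    by_cases h : ∀ i, ev (g i) (y' i) = ev (g i) (y i)
    · rw [if_pos (funext fun i => (h i).symm), if_pos (funext fun i => h i), mul_one]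
    · rw [if_neg (fun hc => h fun i => (congrFun hc i).symm),
        if_neg (fun hc => h fun i => congrFun hc i)]
  -- Step 2: sum over g of the final indicator is a product of counts
  have step2 : ∀ y y' : Fin t → (Fin lam → Bool),
      ∑ g : Fin t → H, (if ∀ i, ev (g i) (y' i) = ev (g i) (y i) then (1:ℝ) else 0)
      = ∏ i, ((Finset.univ.filter (fun h : H => ev h (y' i) = ev h (y i))).card : ℝ) := by
    intro y y'
    have h1 : ∀ g : Fin t → H,
        (if ∀ i, ev (g i) (y' i) = ev (g i) (y i) then (1:ℝ) else 0)
        = ∏ i, (if ev (g i) (y' i) = ev (g i) (y i) then (1:ℝ) else 0) := by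
      intro g
      by_cases h : ∀ i, ev (g i) (y' i) = ev (g i) (y i)
      · rw [if_pos h]
        exact (Finset.prod_eq_one fun i _ => if_pos (h i)).symm
      · rw [if_neg h]
        push_neg at h
        obtain ⟨i, hi⟩ := h
        symm
        exact Finset.prod_eq_zero (Finset.mem_univ i) (if_neg hi)
    simp only [h1]
    calc ∑ g : Fin t → H, ∏ i, (if ev (g i) (y' i) = ev (g i) (y i) then (1:ℝ) else 0)
        = ∏ i, ∑ h : H, (if ev h (y' i) = ev h (y i) then (1:ℝ) else 0) :=
          (Fintype.prod_sum (κ := fun _ : Fin t => H)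
            (fun i h => if ev h (y' i) = ev h (y i) then (1:ℝ) else 0)).symm
      _ = ∏ i, ((Finset.univ.filter (fun h : H => ev h (y' i) = ev h (y i))).card : ℝ) := by
          refine Finset.prod_congr rfl fun i _ => ?_
          rw [Finset.sum_boole]
  -- Step 3: per-block count bound
  have step3 : ∀ (y y' : Fin t → (Fin lam → Bool)) (i : Fin t),
      ((Finset.univ.filter (fun h : H => ev h (y' i) = ev h (y i))).card : ℝ)
      ≤ K * ((if y' i = y i then (1:ℝ) else 0) + β) := by
    intro y y' i
    by_cases h : y' i = y i
    · rw [if_pos h]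
      have hle : ((Finset.univ.filter (fun h : H => ev h (y' i) = ev h (y i))).card : ℝ) ≤ K := by
        rw [hKdef, ← Finset.card_univ]
        exact_mod_cast Finset.card_filter_le _ _
      nlinarith
    · rw [if_neg h, zero_add]
      exact huniv _ _ h
  -- Step 5: density bound for fixed y
  have step5 : ∀ y : Fin t → (Fin lam → Bool),
      ∑ y', p y' * ∏ i, ((if y' i = y i then (1:ℝ) else 0) + β) ≤ (γ + β) ^ t := by
    intro y
    have expand : ∀ y' : Fin t → (Fin lam → Bool),
        ∏ i, ((if y' i = y i then (1:ℝ) else 0) + β)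
        = ∑ S : Finset (Fin t),
            (if ∀ i ∈ S, y' i = y i then (1:ℝ) else 0) * β ^ (Sᶜ.card) := by
      intro y'
      rw [Fintype.prod_add]
      refine Finset.sum_congr rfl fun S _ => ?_
      rw [Finset.prod_const]
      congr 1
      by_cases hS : ∀ i ∈ S, y' i = y i
      · rw [if_pos hS]
        exact Finset.prod_eq_one fun i hi => if_pos (hS i hi)
      · rw [if_neg hS]
        push_neg at hS
        obtain ⟨i, hi, hne⟩ := hS
        exact Finset.prod_eq_zero hi (if_neg hne)
    calc ∑ y', p y' * ∏ i, ((if y' i = y i then (1:ℝ) else 0) + β)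
        = ∑ S : Finset (Fin t),
            (∑ y', if ∀ i ∈ S, y' i = y i then p y' else 0) * β ^ (Sᶜ.card) := by
          simp only [expand, Finset.mul_sum]
          rw [Finset.sum_comm]
          refine Finset.sum_congr rfl fun S _ => ?_
          rw [Finset.sum_mul]
          refine Finset.sum_congr rfl fun y' _ => ?_
          rw [← mul_assoc, mul_boole]
      _ ≤ ∑ S : Finset (Fin t), γ ^ S.card * β ^ (Sᶜ.card) := by
          refine Finset.sum_le_sum fun S _ => ?_
          refine mul_le_mul_of_nonneg_right ?_ (by positivity)
          calc (∑ y', if ∀ i ∈ S, y' i = y i then p y' else 0)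
              ≤ (2:ℝ) ^ (-((1 - δ) * S.card * lam)) := hdense S y
            _ = γ ^ S.card := by
                rw [hγdef, ← Real.rpow_natCast ((2:ℝ) ^ (-((1 - δ) * lam))) S.card,
                  ← Real.rpow_mul (by norm_num)]
                ring_nf
      _ = (γ + β) ^ t := by
          have h := Fintype.prod_add (fun _ : Fin t => γ) (fun _ : Fin t => β)
          simp only [Finset.prod_const] at h
          rw [← h, Finset.card_univ, Fintype.card_fin]
  -- Assemble
  calc ((Fintype.card H : ℝ) ^ t)⁻¹ * ∑ g : Fin t → H, ∑ u : Fin t → (Fin lam' → Bool),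
        (∑ y, if (∀ i, ev (g i) (y i) = u i) then p y else 0) ^ 2
      = (K ^ t)⁻¹ * ∑ y, ∑ y', p y * p y' *
          ∑ g : Fin t → H, (if ∀ i, ev (g i) (y' i) = ev (g i) (y i) then (1:ℝ) else 0) := by
        rw [hKdef]
        congr 1
        simp only [step1]
        rw [Finset.sum_comm]
        refine Finset.sum_congr rfl fun y _ => ?_
        rw [Finset.sum_comm]
        refine Finset.sum_congr rfl fun y' _ => ?_
        rw [Finset.mul_sum]
    _ ≤ (K ^ t)⁻¹ * ∑ y, ∑ y', p y * p y' * (K ^ t * ∏ i, ((if y' i = y i then (1:ℝ) else 0) + β)) := by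
        refine mul_le_mul_of_nonneg_left ?_ (by positivity)
        refine Finset.sum_le_sum fun y _ => ?_
        refine Finset.sum_le_sum fun y' _ => ?_
        refine mul_le_mul_of_nonneg_left ?_ (mul_nonneg (hp y) (hp y'))
        rw [step2 y y']
        have hKt : (K : ℝ) ^ t * ∏ i, ((if y' i = y i then (1:ℝ) else 0) + β)
            = ∏ i, (K * ((if y' i = y i then (1:ℝ) else 0) + β)) := by
          rw [Finset.prod_mul_distrib, Finset.prod_const, Finset.card_univ, Fintype.card_fin]
        rw [hKt]
        refine Finset.prod_le_prod (fun i _ => by positivity) fun i _ => step3 y y' i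
    _ = ∑ y, p y * ∑ y', p y' * ∏ i, ((if y' i = y i then (1:ℝ) else 0) + β) := by
        rw [Finset.mul_sum]
        refine Finset.sum_congr rfl fun y _ => ?_
        rw [Finset.mul_sum, Finset.mul_sum]
        refine Finset.sum_congr rfl fun y' _ => ?_
        have hKne : (K : ℝ) ^ t ≠ 0 := by positivity
        field_simp
    _ ≤ ∑ y, p y * (γ + β) ^ t := by
        refine Finset.sum_le_sum fun y _ => ?_
        exact mul_le_mul_of_nonneg_left (step5 y) (hp y)
    _ = (γ + β) ^ t := by rw [← Finset.sum_mul, hsum, one_mul]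

lemma lhl_sq_sum_le {ι : Type*} [Fintype ι] (f : ι → ℝ) :
    (∑ i, f i) ^ 2 ≤ (Fintype.card ι : ℝ) * ∑ i, (f i) ^ 2 := by
  have h := Finset.sum_mul_sq_le_sq_mul_sq Finset.univ (fun _ : ι => (1:ℝ)) f
  simpa [Finset.card_univ] using h

set_option maxHeartbeats 1000000 in
/-- Block-wise leftover hash lemma: if `Y` is a `(1-δ)`-dense source over
`({0,1}^λ)^t`, `G = (G₁,…,G_t)` are independent uniform hash functions from a
universal family `{0,1}^λ → {0,1}^λ'`, `U` is uniform over `({0,1}^λ')^t`, and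
`(1-δ)λ > λ' + log₂ t + 1`, then the statistical distance between `(G, G(Y))` and
`(G, U)` is at most `√(2^{-(1-δ)λ + λ' + log₂ t})`. -/
theorem stmt_4 {t lam lam' : ℕ} {H : Type*} [Fintype H] [Nonempty H] (δ : ℝ)
    (ev : H → (Fin lam → Bool) → (Fin lam' → Bool))
    (huniv : ∀ x y : Fin lam → Bool, x ≠ y →
      ((Finset.univ.filter (fun g : H => ev g x = ev g y)).card : ℝ)
        ≤ (Fintype.card H : ℝ) * (2 : ℝ) ^ (-(lam' : ℝ)))
    (p : (Fin t → (Fin lam → Bool)) → ℝ)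
    (hp : ∀ y, 0 ≤ p y) (hsum : ∑ y, p y = 1)
    (hdense : ∀ (I : Finset (Fin t)) (v : Fin t → (Fin lam → Bool)),
      (∑ y, if ∀ i ∈ I, y i = v i then p y else 0)
        ≤ (2 : ℝ) ^ (-((1 - δ) * I.card * lam)))
    (hcond : (1 - δ) * lam > lam' + Real.logb 2 t + 1) :
    (1 / 2) * ∑ g : Fin t → H, ∑ u : Fin t → (Fin lam' → Bool),
        |((Fintype.card H : ℝ) ^ t)⁻¹ *
            (∑ y, if (∀ i, ev (g i) (y i) = u i) then p y else 0)
          - ((Fintype.card H : ℝ) ^ t)⁻¹ * (2 : ℝ) ^ (-((lam' : ℝ) * t))|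
      ≤ Real.sqrt ((2 : ℝ) ^ (-(1 - δ) * lam + lam' + Real.logb 2 t)) := by
  classical
  have hK0 : (0:ℝ) < ((Fintype.card H : ℝ)) := by exact_mod_cast Fintype.card_pos (α := H)
  set K : ℝ := (Fintype.card H : ℝ) with hKdef
  set μ : ℝ := (2 : ℝ) ^ (-((lam' : ℝ) * t)) with hμdef
  set R : ℝ := (2 : ℝ) ^ (-(1 - δ) * lam + lam' + Real.logb 2 t) with hRdef
  set β : ℝ := (2 : ℝ) ^ (-(lam' : ℝ)) with hβdef
  set γ : ℝ := (2 : ℝ) ^ (-((1 - δ) * lam)) with hγdef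
  set e : ℝ := (2 : ℝ) ^ ((lam' : ℝ) - (1 - δ) * lam) with hedef
  have hβ0 : (0:ℝ) < β := Real.rpow_pos_of_pos two_pos _
  have hγ0 : (0:ℝ) < γ := Real.rpow_pos_of_pos two_pos _
  have he0 : (0:ℝ) < e := Real.rpow_pos_of_pos two_pos _
  have hμ0 : (0:ℝ) < μ := Real.rpow_pos_of_pos two_pos _
  have hR0 : (0:ℝ) < R := Real.rpow_pos_of_pos two_pos _
  have hKt0 : (0:ℝ) < K ^ t := by positivity
  have hβe : β * e = γ := by
    rw [hβdef, hedef, hγdef, ← Real.rpow_add two_pos]; congr 1; ring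
  have hμβ : μ = β ^ t := by
    rw [hμdef, hβdef, ← Real.rpow_natCast ((2:ℝ) ^ (-(lam':ℝ))) t,
      ← Real.rpow_mul (by norm_num : (0:ℝ) ≤ 2)]
    congr 1; ring
  set M : ℝ := (Fintype.card (Fin t → Fin lam' → Bool) : ℝ) with hMdef
  have hM0 : (0:ℝ) ≤ M := by rw [hMdef]; positivity
  have hcard2 : Fintype.card (Fin t → Fin lam' → Bool) = 2 ^ (lam' * t) := by
    simp [Fintype.card_fun, pow_mul]
  have hMμ : M * μ = 1 := by
    rw [hMdef, hcard2, hμdef]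
    push_cast
    rw [← Real.rpow_natCast (2:ℝ) (lam' * t), ← Real.rpow_add two_pos,
      show (((lam' * t : ℕ) : ℝ) + -((lam' : ℝ) * (t : ℝ))) = 0 by push_cast; ring]
    exact Real.rpow_zero 2
  have hMβt : M * β ^ t = 1 := by rw [← hμβ]; exact hMμ
  have hcard1 : ((Fintype.card (Fin t → H) : ℕ) : ℝ) = K ^ t := by
    have h : Fintype.card (Fin t → H) = Fintype.card H ^ t := by
      simp [Fintype.card_fun]
    rw [h, hKdef]; push_cast; ring
  set c : ℝ := (K ^ t)⁻¹ with hcdef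
  set T : ℝ := ∑ g : Fin t → H, ∑ u : Fin t → (Fin lam' → Bool),
      |c * (∑ y, if (∀ i, ev (g i) (y i) = u i) then p y else 0) - c * μ| with hTdef
  -- goal should now be 1/2 * T ≤ √R
  have hT0 : (0:ℝ) ≤ T := by rw [hTdef]; positivity
  have hone := lhl_sum_one ev p hsum
  have hA := lhl_collision δ ev huniv p hp hsum hdense
  rw [← hKdef, ← hγdef, ← hβdef, ← hcdef] at hA
  set A : ℝ := ∑ g : Fin t → H, ∑ u : Fin t → (Fin lam' → Bool),
      (∑ y, if (∀ i, ev (g i) (y i) = u i) then p y else 0) ^ 2 with hAdef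
  -- hA : c * A ≤ (γ + β) ^ t
  -- per-g variance identity
  have hvar : ∀ g : Fin t → H,
      ∑ u : Fin t → Fin lam' → Bool,
        (c * (∑ y, if (∀ i, ev (g i) (y i) = u i) then p y else 0) - c * μ) ^ 2
      = c ^ 2 * ((∑ u : Fin t → Fin lam' → Bool,
          (∑ y, if (∀ i, ev (g i) (y i) = u i) then p y else 0) ^ 2) - μ) := by
    intro g
    calc ∑ u : Fin t → Fin lam' → Bool,
          (c * (∑ y, if (∀ i, ev (g i) (y i) = u i) then p y else 0) - c * μ) ^ 2
        = ∑ u : Fin t → Fin lam' → Bool,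
            (c ^ 2 * (∑ y, if (∀ i, ev (g i) (y i) = u i) then p y else 0) ^ 2
              - (2 * c ^ 2 * μ) * (∑ y, if (∀ i, ev (g i) (y i) = u i) then p y else 0)
              + c ^ 2 * μ ^ 2) := Finset.sum_congr rfl fun u _ => by ring
      _ = c ^ 2 * (∑ u : Fin t → Fin lam' → Bool,
            (∑ y, if (∀ i, ev (g i) (y i) = u i) then p y else 0) ^ 2)
          - (2 * c ^ 2 * μ) * (∑ u : Fin t → Fin lam' → Bool,
            (∑ y, if (∀ i, ev (g i) (y i) = u i) then p y else 0))
          + M * (c ^ 2 * μ ^ 2) := by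
          rw [Finset.sum_add_distrib, Finset.sum_sub_distrib, ← Finset.mul_sum, ← Finset.mul_sum,
            Finset.sum_const, Finset.card_univ, nsmul_eq_mul, hMdef]
      _ = c ^ 2 * ((∑ u : Fin t → Fin lam' → Bool,
            (∑ y, if (∀ i, ev (g i) (y i) = u i) then p y else 0) ^ 2) - μ) := by
          rw [hone g]
          have h2 : M * (c ^ 2 * μ ^ 2) = c ^ 2 * μ := by
            calc M * (c ^ 2 * μ ^ 2) = (M * μ) * (c ^ 2 * μ) := by ring
              _ = c ^ 2 * μ := by rw [hMμ, one_mul]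
          rw [h2]; ring
  -- Cauchy-Schwarz twice
  have hCS1 : T ^ 2 ≤ K ^ t * ∑ g : Fin t → H, (∑ u : Fin t → Fin lam' → Bool,
      |c * (∑ y, if (∀ i, ev (g i) (y i) = u i) then p y else 0) - c * μ|) ^ 2 := by
    rw [hTdef, ← hcard1]
    exact lhl_sq_sum_le _
  have hCS2 : ∀ g : Fin t → H, (∑ u : Fin t → Fin lam' → Bool,
      |c * (∑ y, if (∀ i, ev (g i) (y i) = u i) then p y else 0) - c * μ|) ^ 2
      ≤ M * ∑ u : Fin t → Fin lam' → Bool,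
        (c * (∑ y, if (∀ i, ev (g i) (y i) = u i) then p y else 0) - c * μ) ^ 2 := by
    intro g
    have h := lhl_sq_sum_le (fun u : Fin t → Fin lam' → Bool =>
      |c * (∑ y, if (∀ i, ev (g i) (y i) = u i) then p y else 0) - c * μ|)
    simp only [sq_abs] at h
    exact h
  have hT2 : T ^ 2 ≤ M * (c * A - μ) := by
    calc T ^ 2 ≤ K ^ t * ∑ g : Fin t → H, (∑ u : Fin t → Fin lam' → Bool,
          |c * (∑ y, if (∀ i, ev (g i) (y i) = u i) then p y else 0) - c * μ|) ^ 2 := hCS1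
      _ ≤ K ^ t * ∑ g : Fin t → H, (M * ∑ u : Fin t → Fin lam' → Bool,
          (c * (∑ y, if (∀ i, ev (g i) (y i) = u i) then p y else 0) - c * μ) ^ 2) := by
          exact mul_le_mul_of_nonneg_left
            (Finset.sum_le_sum fun g _ => hCS2 g) (le_of_lt hKt0)
      _ = K ^ t * M * ∑ g : Fin t → H, (c ^ 2 * ((∑ u : Fin t → Fin lam' → Bool,
          (∑ y, if (∀ i, ev (g i) (y i) = u i) then p y else 0) ^ 2) - μ)) := by
          rw [← Finset.mul_sum, ← mul_assoc]
          congr 1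
          exact Finset.sum_congr rfl fun g _ => hvar g
      _ = K ^ t * M * (c ^ 2 * (A - K ^ t * μ)) := by
          congr 1
          rw [← Finset.mul_sum, Finset.sum_sub_distrib, Finset.sum_const, Finset.card_univ,
            nsmul_eq_mul, hcard1, ← hAdef]
      _ = M * (c * A - μ) := by
          have hKne : K ^ t ≠ 0 := ne_of_gt hKt0
          rw [hcdef]
          field_simp
  -- numeric bounds
  have hte : (t : ℝ) * e ≤ R := by
    rcases Nat.eq_zero_or_pos t with ht | ht
    · rw [ht]; simpa using hR0.le
    · have ht0 : (0:ℝ) < (t : ℝ) := by exact_mod_cast ht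
      have hlog : (2:ℝ) ^ (Real.logb 2 (t : ℝ)) = (t : ℝ) :=
        Real.rpow_logb two_pos (by norm_num) ht0
      rw [← hlog, hedef, ← Real.rpow_add two_pos, hRdef]
      exact le_of_eq (by congr 1; ring)
  have hR_half : R ≤ 1 / 2 := by
    have hx : -(1 - δ) * lam + lam' + Real.logb 2 t < -1 := by
      have hexp : -(1 - δ) * (lam:ℝ) = -((1 - δ) * lam) := by ring
      rw [hexp]; linarith
    have h2 : R < (2:ℝ) ^ (-1 : ℝ) := by
      rw [hRdef]
      exact (Real.rpow_lt_rpow_left_iff (by norm_num : (1:ℝ) < 2)).mpr hx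
    have h3 : (2:ℝ) ^ (-1 : ℝ) = 1 / 2 := by
      rw [Real.rpow_neg_one]; norm_num
    rw [h3] at h2
    exact h2.le
  have hte_half : (t : ℝ) * e ≤ 1 / 2 := hte.trans hR_half
  have hpow := lhl_pow_aux e he0.le t hte_half
  have hT2' : T ^ 2 ≤ 2 * t * e := by
    calc T ^ 2 ≤ M * (c * A - μ) := hT2
      _ ≤ M * ((γ + β) ^ t - β ^ t) := by
          refine mul_le_mul_of_nonneg_left ?_ hM0
          rw [hμβ] at *
          linarith [hA]
      _ = (M * β ^ t) * ((1 + e) ^ t - 1) := by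
          have hgb : γ + β = β * (1 + e) := by rw [← hβe]; ring
          rw [hgb, mul_pow]; ring
      _ = (1 + e) ^ t - 1 := by rw [hMβt, one_mul]
      _ ≤ 2 * t * e := by linarith [hpow]
  have hgoal2 : ((1 / 2) * T) ^ 2 ≤ R := by
    have hnn : (0:ℝ) ≤ (t : ℝ) * e := mul_nonneg (Nat.cast_nonneg t) he0.le
    nlinarith [hT2', hte]
  have h12 : (0:ℝ) ≤ (1 / 2) * T := by linarith
  exact (Real.le_sqrt h12 hR0.le).mpr hgoal2
end

section
/- Let Y be a (1-\delta)-dense source over (\{0,1\}^\lambda)^t, let G = (G_1,...,G_t) be chosen independently and uniformly from a universal hash family \mathcal{G} with range \{0,1\}^{\lambda'}, and suppose (1-\delta)\lambda > \lambda' + \log_2 t + 1. Then Pr_{G, Y, Y'}[G(Y) = G(Y')] \leq 2^{-\lambda' t}·(1 + 2^{-(1-\delta)\lambda + \lambda' + \log_2 t + 1}), where Y' is an independent copy of Y and G(Y) = (G_1(Y_1),...,G_t(Y_t)). -/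
/-!
For fixed `y, y'` the hash functions act independently on the blocks, so the probability of a
blockwise collision is at most `∏ i, ([y i = y' i] + 2^{-λ'})`. Expanding the product over the
set `S` of blocks where the indicator is chosen, the density of `Y` bounds `Pr[Y_S = Y'_S]` by
`2^{-(1-δ)λ|S|}`, and the binomial theorem sums everything to `(2^{-(1-δ)λ} + 2^{-λ'})^t`, that is
`2^{-λ't} (1 + x)^t` with `x = 2^{λ' - (1-δ)λ}`. The hypothesis on `λ` says exactly `2tx < 1`,
in which range `(1 + x)^t ≤ 1 + 2tx`.
-/

open Finset

theorem one_add_pow_le_one_add_two_mul {x : ℝ} (hx : 0 ≤ x) :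
    ∀ n : ℕ, 2 * n * x ≤ 1 → (1 + x) ^ n ≤ 1 + 2 * n * x
  | 0, _ => by simp
  | n + 1, h => by
    push_cast at h ⊢
    have ih := one_add_pow_le_one_add_two_mul hx n (by nlinarith)
    have : 0 ≤ (1 + x) ^ n := by positivity
    rw [pow_succ]
    nlinarith

theorem card_filter_forall_apply {ι α : Type*} [Fintype ι] [DecidableEq ι] [Fintype α]
    (P : ι → α → Prop) [∀ i, DecidablePred (P i)] :
    #{g : ι → α | ∀ i, P i (g i)} = ∏ i, #{a | P i a} := by
  rw [← Fintype.card_piFinset]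
  congr 1
  ext g
  simp [Fintype.mem_piFinset]

theorem prod_boole_add_eq_sum_powerset {ι R : Type*} [Fintype ι] [DecidableEq ι] [CommSemiring R]
    (P : ι → Prop) [DecidablePred P] (c : R) :
    ∏ i, ((if P i then 1 else 0) + c) =
      ∑ S ∈ univ.powerset, (if ∀ i ∈ S, P i then 1 else 0) * c ^ (Fintype.card ι - #S) := by
  rw [prod_add]
  refine sum_congr rfl fun S hS => ?_
  rw [prod_boole, prod_const, card_sdiff_of_subset (mem_powerset.mp hS), card_univ]
  congr

theorem sum_sum_ite_agree_le {ι X : Type*} [Fintype ι] [DecidableEq ι] [Fintype X] [DecidableEq X]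
    (p : (ι → X) → ℝ) (hp : ∀ y, 0 ≤ p y) (hsum : ∑ y, p y = 1) (S : Finset ι) {b : ℝ}
    (hb : ∀ v : ι → X, (∑ y, if ∀ i ∈ S, y i = v i then p y else 0) ≤ b) :
    (∑ y, ∑ y', if ∀ i ∈ S, y i = y' i then p y * p y' else 0) ≤ b := by
  calc (∑ y, ∑ y', if ∀ i ∈ S, y i = y' i then p y * p y' else 0)
      = ∑ y', p y' * ∑ y, if ∀ i ∈ S, y i = y' i then p y else 0 := by
        rw [sum_comm]
        simp only [mul_sum, mul_ite, mul_zero, mul_comm]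
    _ ≤ ∑ y', p y' * b := sum_le_sum fun y' _ => mul_le_mul_of_nonneg_left (hb y') (hp y')
    _ = b := by rw [← sum_mul, hsum, one_mul]

section UniversalHashing

variable {H X Z : Type*} [Fintype H] [DecidableEq X] [DecidableEq Z]

theorem card_collisions_le (ev : H → X → Z) {ε : ℝ} (hε : 0 ≤ ε)
    (huniv : ∀ x y, x ≠ y → (#{h | ev h x = ev h y} : ℝ) ≤ Fintype.card H * ε) (x y : X) :
    (#{h | ev h x = ev h y} : ℝ) ≤ Fintype.card H * ((if x = y then 1 else 0) + ε) := by
  split_ifs with hxy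
  · have : (#{h | ev h x = ev h y} : ℝ) ≤ Fintype.card H := by exact_mod_cast card_filter_le _ _
    nlinarith
  · simpa using huniv x y hxy

variable {ι : Type*} [Fintype ι] [DecidableEq ι]

theorem card_blockwise_collisions_le (ev : H → X → Z) {ε : ℝ} (hε : 0 ≤ ε)
    (huniv : ∀ x y, x ≠ y → (#{h | ev h x = ev h y} : ℝ) ≤ Fintype.card H * ε) (y y' : ι → X) :
    ((Fintype.card H : ℝ) ^ Fintype.card ι)⁻¹ * #{g : ι → H | ∀ i, ev (g i) (y i) = ev (g i) (y' i)}
      ≤ ∏ i, ((if y i = y' i then 1 else 0) + ε) := by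
  refine inv_mul_le_of_le_mul₀ (by positivity) (by positivity) ?_
  rw [card_filter_forall_apply (fun i h => ev h (y i) = ev h (y' i)), Nat.cast_prod,
    ← card_univ (α := ι), pow_card_mul_prod]
  exact prod_le_prod (fun _ _ => by positivity) fun i _ => card_collisions_le ev hε huniv _ _

theorem sum_blockwise_collision_le_add_pow [Fintype X] (ev : H → X → Z) {ε : ℝ} (hε : 0 ≤ ε)
    (huniv : ∀ x y, x ≠ y → (#{h | ev h x = ev h y} : ℝ) ≤ Fintype.card H * ε)
    (p : (ι → X) → ℝ) (hp : ∀ y, 0 ≤ p y) (hsum : ∑ y, p y = 1) (a : ℝ)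
    (hdense : ∀ (I : Finset ι) (v : ι → X),
      (∑ y, if ∀ i ∈ I, y i = v i then p y else 0) ≤ a ^ #I) :
    (∑ g : ι → H, ((Fintype.card H : ℝ) ^ Fintype.card ι)⁻¹ *
        ∑ y, ∑ y', if (∀ i, ev (g i) (y i) = ev (g i) (y' i)) then p y * p y' else 0)
      ≤ (a + ε) ^ Fintype.card ι := by
  set K := (Fintype.card H : ℝ) ^ Fintype.card ι
  calc (∑ g : ι → H, K⁻¹ *
        ∑ y, ∑ y', if (∀ i, ev (g i) (y i) = ev (g i) (y' i)) then p y * p y' else 0)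
      = ∑ y, ∑ y', p y * p y' *
          (K⁻¹ * #{g : ι → H | ∀ i, ev (g i) (y i) = ev (g i) (y' i)}) := by
        simp only [card_filter, Nat.cast_sum, Nat.cast_ite, Nat.cast_one, Nat.cast_zero, mul_sum,
          mul_ite, mul_one, mul_zero]
        rw [sum_comm]
        refine sum_congr rfl fun y _ => ?_
        rw [sum_comm]
        refine sum_congr rfl fun y' _ => sum_congr rfl fun g _ => ?_
        split_ifs <;> ring
    _ ≤ ∑ y, ∑ y', p y * p y' * ∏ i, ((if y i = y' i then 1 else 0) + ε) := by
        gcongr with y _ y' _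
        · exact mul_nonneg (hp y) (hp y')
        · exact card_blockwise_collisions_le ev hε huniv y y'
    _ = ∑ S ∈ univ.powerset, ε ^ (Fintype.card ι - #S) *
          ∑ y, ∑ y', if ∀ i ∈ S, y i = y' i then p y * p y' else 0 := by
        simp only [prod_boole_add_eq_sum_powerset, mul_sum]
        conv_rhs => rw [sum_comm]
        refine sum_congr rfl fun y _ => ?_
        rw [sum_comm]
        refine sum_congr rfl fun S _ => sum_congr rfl fun y' _ => ?_
        split_ifs <;> ring
    _ ≤ ∑ S ∈ univ.powerset, ε ^ (Fintype.card ι - #S) * a ^ #S := by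
        gcongr with S
        exact sum_sum_ite_agree_le p hp hsum S (hdense S)
    _ = (a + ε) ^ Fintype.card ι := by
        simp_rw [mul_comm (ε ^ _)]
        exact sum_pow_mul_eq_add_pow a ε (univ : Finset ι)

end UniversalHashing

theorem rpow_two_neg_add_pow_le {α β : ℝ} {t : ℕ} (h : β + Real.logb 2 t + 1 < α) :
    ((2 : ℝ) ^ (-α) + 2 ^ (-β)) ^ t ≤ 2 ^ (-(β * t)) * (1 + 2 ^ (-α + β + Real.logb 2 t + 1)) := by
  rcases t.eq_zero_or_pos with rfl | ht
  · simp only [pow_zero, Nat.cast_zero, mul_zero, neg_zero, Real.rpow_zero, one_mul]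
    linarith [Real.rpow_pos_of_pos two_pos (-α + β + Real.logb 2 0 + 1)]
  set x : ℝ := 2 ^ (β - α) with hx
  have h2tx : (2 : ℝ) ^ (-α + β + Real.logb 2 t + 1) = 2 * t * x := by
    rw [show -α + β + Real.logb 2 t + 1 = β - α + Real.logb 2 t + 1 by ring,
      Real.rpow_add two_pos, Real.rpow_add two_pos, Real.rpow_logb two_pos (by norm_num)
        (by exact_mod_cast ht), Real.rpow_one]
    ring
  have hsplit : (2 : ℝ) ^ (-α) + 2 ^ (-β) = 2 ^ (-β) * (1 + x) := by
    rw [mul_add, mul_one, hx, ← Real.rpow_add two_pos]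
    ring_nf
  have hsmall : 2 * t * x ≤ 1 := by
    rw [← h2tx]
    exact Real.rpow_le_one_of_one_le_of_nonpos one_le_two (by linarith)
  calc ((2 : ℝ) ^ (-α) + 2 ^ (-β)) ^ t = ((2 : ℝ) ^ (-β)) ^ t * (1 + x) ^ t := by
        rw [hsplit, mul_pow]
    _ ≤ ((2 : ℝ) ^ (-β)) ^ t * (1 + 2 * t * x) := by
        gcongr
        exact one_add_pow_le_one_add_two_mul (by positivity) t hsmall
    _ = 2 ^ (-(β * t)) * (1 + 2 ^ (-α + β + Real.logb 2 t + 1)) := by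
        rw [h2tx, ← Real.rpow_natCast, ← Real.rpow_mul zero_le_two, neg_mul]

theorem stmt_5_general {t lam lam' : ℕ} {H : Type*} [Fintype H] (δ : ℝ)
    (ev : H → (Fin lam → Bool) → (Fin lam' → Bool))
    (huniv : ∀ x y : Fin lam → Bool, x ≠ y →
      ((Finset.univ.filter (fun g : H => ev g x = ev g y)).card : ℝ)
        ≤ (Fintype.card H : ℝ) * (2 : ℝ) ^ (-(lam' : ℝ)))
    (p : (Fin t → (Fin lam → Bool)) → ℝ)
    (hp : ∀ y, 0 ≤ p y) (hsum : ∑ y, p y = 1)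
    (hdense : ∀ (I : Finset (Fin t)) (v : Fin t → (Fin lam → Bool)),
      (∑ y, if ∀ i ∈ I, y i = v i then p y else 0)
        ≤ (2 : ℝ) ^ (-((1 - δ) * I.card * lam)))
    (hcond : (1 - δ) * lam > lam' + Real.logb 2 t + 1) :
    (∑ g : Fin t → H, ((Fintype.card H : ℝ) ^ t)⁻¹ *
        ∑ y, ∑ y', if (∀ i, ev (g i) (y i) = ev (g i) (y' i)) then p y * p y' else 0)
      ≤ (2 : ℝ) ^ (-((lam' : ℝ) * t)) *
          (1 + (2 : ℝ) ^ (-(1 - δ) * lam + lam' + Real.logb 2 t + 1)) := by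
  have hdense_pow (I : Finset (Fin t)) (v : Fin t → Fin lam → Bool) :
      (∑ y, if ∀ i ∈ I, y i = v i then p y else 0) ≤ ((2 : ℝ) ^ (-((1 - δ) * lam))) ^ #I := by
    rw [← Real.rpow_natCast, ← Real.rpow_mul zero_le_two]
    convert hdense I v using 2
    ring
  -- `∀ i : Fin t` is decided by `Nat.decidableForallFin`, not by the generic `Fintype` instance
  have hcollision := sum_blockwise_collision_le_add_pow ev (by positivity) huniv p hp hsum _
    fun I v => by convert hdense_pow I v
  rw [Fintype.card_fin] at hcollision
  rw [neg_mul]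
  refine le_trans (le_of_eq ?_) (hcollision.trans (rpow_two_neg_add_pow_le hcond))
  congr!

/-- Collision probability bound for block-wise hashing: with `Y` a `(1-δ)`-dense source
over `({0,1}^λ)^t`, `G` independent uniform hash functions from a universal family with
range `{0,1}^λ'`, `Y'` an independent copy of `Y`, and `(1-δ)λ > λ' + log₂ t + 1`,
`Pr_{G,Y,Y'}[G(Y) = G(Y')] ≤ 2^{-λ't}(1 + 2^{-(1-δ)λ + λ' + log₂ t + 1})`. -/
theorem stmt_5 {t lam lam' : ℕ} {H : Type*} [Fintype H] [Nonempty H] (δ : ℝ)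
    (ev : H → (Fin lam → Bool) → (Fin lam' → Bool))
    (huniv : ∀ x y : Fin lam → Bool, x ≠ y →
      ((Finset.univ.filter (fun g : H => ev g x = ev g y)).card : ℝ)
        ≤ (Fintype.card H : ℝ) * (2 : ℝ) ^ (-(lam' : ℝ)))
    (p : (Fin t → (Fin lam → Bool)) → ℝ)
    (hp : ∀ y, 0 ≤ p y) (hsum : ∑ y, p y = 1)
    (hdense : ∀ (I : Finset (Fin t)) (v : Fin t → (Fin lam → Bool)),
      (∑ y, if ∀ i ∈ I, y i = v i then p y else 0)
        ≤ (2 : ℝ) ^ (-((1 - δ) * I.card * lam)))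
    (hcond : (1 - δ) * lam > lam' + Real.logb 2 t + 1) :
    (∑ g : Fin t → H, ((Fintype.card H : ℝ) ^ t)⁻¹ *
        ∑ y, ∑ y', if (∀ i, ev (g i) (y i) = ev (g i) (y' i)) then p y * p y' else 0)
      ≤ (2 : ℝ) ^ (-((lam' : ℝ) * t)) *
          (1 + (2 : ℝ) ^ (-(1 - δ) * lam + lam' + Real.logb 2 t + 1)) :=
  stmt_5_general δ ev huniv p hp hsum hdense hcond
end

section
/- Let X be a random variable over (\{0,1\}^\lambda)^n that is a convex combination of (k, 1-\delta)-dense sources, i.e., sources fixed on at most k coordinates and (1-\delta)-dense on the rest. Let G be uniform over \mathcal{G}^n for a universal hash family \mathcal{G} with range \{0,1\}^{\lambda'}, independent of X, and assume (1-\delta)\lambda > \lambda' + \log_2 n + 1. Then there exists a family \{V_g\}_{g} of convex combinations of k-bit-fixing (n, 2^{\lambda'})-sources such that \Delta[(G, G(X)), (G, V_G)] \leq \sqrt{2^{-(1-\delta)\lambda + \lambda' + \log_2 n}}. -/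
/-- A `k`-bit-fixing `(n, 2^λ')`-source (with real parameter `k`): fixed on at most `k`
coordinates and uniform on the remaining coordinates `J`. -/
def IsBitFixingR {n lam' : ℕ} (k : ℝ) (p : (Fin n → (Fin lam' → Bool)) → ℝ) : Prop :=
  ∃ J : Finset (Fin n), ((n : ℝ) - J.card ≤ k) ∧ ∃ w : Fin n → (Fin lam' → Bool),
    ∀ x, p x = if ∀ i ∉ J, x i = w i then (((2 : ℝ) ^ lam') ^ J.card)⁻¹ else 0

/-- A convex combination of `k`-bit-fixing sources. -/
def IsConvexCombBitFixing {n lam' : ℕ} (k : ℝ)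
    (V : (Fin n → (Fin lam' → Bool)) → ℝ) : Prop :=
  ∃ (m : ℕ) (wt : Fin m → ℝ) (q : Fin m → (Fin n → (Fin lam' → Bool)) → ℝ),
    (∀ i, 0 ≤ wt i) ∧ (∑ i, wt i = 1) ∧ (∀ i, IsBitFixingR k (q i)) ∧
    ∀ x, V x = ∑ i, wt i * q i x

/-- `(1-δ)`-density on a set `J` of coordinates. -/
def IsDenseOn {n lam : ℕ} (δ : ℝ) (J : Finset (Fin n))
    (p : (Fin n → (Fin lam → Bool)) → ℝ) : Prop :=
  ∀ I ⊆ J, ∀ v : Fin n → (Fin lam → Bool),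
    (∑ x, if ∀ i ∈ I, x i = v i then p x else 0)
      ≤ (2 : ℝ) ^ (-((1 - δ) * I.card * lam))

/-- A `(k, 1-δ)`-dense source: fixed on at most `k` coordinates and `(1-δ)`-dense on
the remaining coordinates. -/
def IsKDense {n lam : ℕ} (k δ : ℝ) (p : (Fin n → (Fin lam → Bool)) → ℝ) : Prop :=
  ∃ J : Finset (Fin n), ((n : ℝ) - J.card ≤ k) ∧
    (∃ w : Fin n → (Fin lam → Bool), ∀ x, p x ≠ 0 → ∀ i ∉ J, x i = w i) ∧
    IsDenseOn δ J p


open Finset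

lemma pow_bound (t : ℝ) (ht : 0 ≤ t) : ∀ n : ℕ, (n:ℝ) * t ≤ 1/2 → (1+t)^n ≤ 1 + 2*n*t := by
  intro n
  induction n with
  | zero => intro _; norm_num
  | succ n ih =>
    intro h
    have hn : (n:ℝ)*t ≤ 1/2 := by
      refine le_trans ?_ h
      push_cast
      nlinarith
    have ihh := ih hn
    have h1 : (1+t)^(n+1) = (1+t)^n * (1+t) := pow_succ _ _
    have hmul := mul_le_mul_of_nonneg_right ihh (by linarith : (0:ℝ) ≤ 1+t)
    push_cast
    push_cast at h
    nlinarith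

lemma final_num {n lam lam' : ℕ} (δ : ℝ) (m : ℕ) (hm : m ≤ n)
    (hcond : (1 - δ) * lam > lam' + Real.logb 2 n + 1) :
    (1/2) * Real.sqrt ((1 + (2:ℝ)^((lam':ℝ) - (1-δ)*lam))^m - 1)
      ≤ Real.sqrt ((2 : ℝ) ^ (-(1 - δ) * lam + lam' + Real.logb 2 n)) := by
  set t : ℝ := (2:ℝ)^((lam':ℝ) - (1-δ)*lam) with hts
  have ht : 0 < t := Real.rpow_pos_of_pos (by norm_num) _
  set s : ℝ := (2 : ℝ) ^ (-(1 - δ) * lam + lam' + Real.logb 2 n) with hss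
  have hs : 0 < s := Real.rpow_pos_of_pos (by norm_num) _
  have key : (1 + t)^m - 1 ≤ 4 * s := by
    rcases Nat.eq_zero_or_pos n with hn | hn
    · subst hn
      interval_cases m
      simp
      positivity
    · have hrn : ((2:ℝ) ^ (Real.logb 2 n)) = (n:ℝ) :=
        Real.rpow_logb (by norm_num) (by norm_num) (by exact_mod_cast hn)
      have hsnt : s = (n:ℝ) * t := by
        rw [hss, hts, show -(1 - δ) * (lam:ℝ) + lam' + Real.logb 2 n
          = ((lam':ℝ) - (1-δ)*lam) + Real.logb 2 n by ring,
          Real.rpow_add (by norm_num), hrn]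
        ring
      have hshalf : s < 1/2 := by
        have hlt : (-(1 - δ) * (lam:ℝ) + lam' + Real.logb 2 n) < -1 := by linarith
        calc s < (2:ℝ) ^ (-1 : ℝ) := by
                rw [hss]
                exact Real.rpow_lt_rpow_of_exponent_lt (by norm_num) hlt
          _ = 1/2 := by
                rw [Real.rpow_neg (by norm_num), Real.rpow_one]
                norm_num
      have hnt : (n:ℝ) * t ≤ 1/2 := by rw [← hsnt]; linarith
      have hb1 : (1+t)^m ≤ (1+t)^n := pow_le_pow_right₀ (by linarith) hm
      have hb2 : (1+t)^n ≤ 1 + 2*n*t := pow_bound t ht.le n hnt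
      rw [hsnt]; nlinarith [ht.le, Nat.cast_nonneg (α := ℝ) n]
  have heq : (1/2) * Real.sqrt ((1 + t)^m - 1) = Real.sqrt (((1+t)^m - 1)/4) := by
    rw [show ((1+t)^m - 1)/4 = (1/4) * ((1+t)^m - 1) by ring,
      Real.sqrt_mul (by norm_num),
      show Real.sqrt (1/4) = 1/2 by
        rw [show (1/4:ℝ) = (1/2)^2 by norm_num, Real.sqrt_sq (by norm_num)]]
  rw [heq]
  exact Real.sqrt_le_sqrt (by linarith)

lemma count_fixed {Y : Type*} [Fintype Y] [DecidableEq Y] {n : ℕ} (J : Finset (Fin n))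
    (z : Fin n → Y) :
    (Finset.univ.filter (fun u : Fin n → Y => ∀ j ∉ J, u j = z j)).card
      = Fintype.card Y ^ J.card := by
  classical
  rw [← Fintype.card_subtype]
  have e : {u : Fin n → Y // ∀ j ∉ J, u j = z j} ≃ ({x // x ∈ J} → Y) :=
    { toFun := fun u j => u.1 j
      invFun := fun v => ⟨fun j => if h : j ∈ J then v ⟨j, h⟩ else z j,
        fun j hj => dif_neg hj⟩
      left_inv := fun u => by
        ext j
        by_cases h : j ∈ J
        · simp [h]
        · simp [h, u.2 j h]
      right_inv := fun v => by
        ext j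
        simp [j.2] }
  rw [Fintype.card_congr e, Fintype.card_fun, Fintype.card_coe]

lemma abs_sum_le {Y : Type*} [Fintype Y] (P : Y → Prop) [DecidablePred P] (f : Y → ℝ)
    (hf : ∀ u, ¬ P u → f u = 0) (S' : ℝ) (hS' : ((Finset.univ.filter P).card : ℝ) = S') :
    ∑ u, |f u| ≤ Real.sqrt S' * Real.sqrt (∑ u, (f u)^2) := by
  have h1 : ∀ u, |f u| = (if P u then (1:ℝ) else 0) * |f u| := by
    intro u
    by_cases h : P u
    · rw [if_pos h, one_mul]
    · rw [if_neg h, zero_mul, hf u h, abs_zero]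
  calc ∑ u, |f u| = ∑ u, (if P u then (1:ℝ) else 0) * |f u| :=
        Finset.sum_congr rfl fun u _ => h1 u
    _ ≤ Real.sqrt (∑ u, (if P u then (1:ℝ) else 0)^2) * Real.sqrt (∑ u, |f u|^2) :=
        Real.sum_mul_le_sqrt_mul_sqrt _ _ _
    _ = Real.sqrt S' * Real.sqrt (∑ u, (f u)^2) := by
        congr 2
        · have h2 : ∀ u, (if P u then (1:ℝ) else 0)^2 = if P u then (1:ℝ) else 0 := by
            intro u; split_ifs <;> norm_num
          rw [Finset.sum_congr rfl fun u _ => h2 u, Finset.sum_boole, hS']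
        · exact Finset.sum_congr rfl fun u _ => sq_abs _

set_option maxHeartbeats 2000000 in
lemma core {n lam lam' : ℕ} {H : Type*} [Fintype H] [Nonempty H] (δ : ℝ)
    (ev : H → (Fin lam → Bool) → (Fin lam' → Bool))
    (huniv : ∀ x y : Fin lam → Bool, x ≠ y →
      ((Finset.univ.filter (fun g : H => ev g x = ev g y)).card : ℝ)
        ≤ (Fintype.card H : ℝ) * (2 : ℝ) ^ (-(lam' : ℝ)))
    (q : (Fin n → (Fin lam → Bool)) → ℝ)
    (hq0 : ∀ x, 0 ≤ q x) (hq1 : ∑ x, q x = 1)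
    (J : Finset (Fin n)) (w : Fin n → (Fin lam → Bool))
    (hsupp : ∀ x, q x ≠ 0 → ∀ i ∉ J, x i = w i)
    (hdense : IsDenseOn δ J q) :
    (1/2) * ∑ g : Fin n → H, ∑ u : Fin n → (Fin lam' → Bool),
      ((Fintype.card H : ℝ)^n)⁻¹ *
        |(∑ x, if (∀ i, ev (g i) (x i) = u i) then q x else 0)
          - (if ∀ j ∉ J, u j = ev (g j) (w j) then (((2:ℝ)^lam')^J.card)⁻¹ else 0)|
      ≤ (1/2) * Real.sqrt ((1 + (2:ℝ)^((lam':ℝ) - (1-δ)*lam))^J.card - 1) := by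
  classical
  have hHpos : (0:ℝ) < Fintype.card H := by
    exact_mod_cast Fintype.card_pos
  set c : ℝ := ((Fintype.card H : ℝ)^n)⁻¹ with hc
  have hcpos : 0 < c := by positivity
  set S : ℝ := ((2:ℝ)^lam')^J.card with hS
  have hSpos : 0 < S := by positivity
  set β : ℝ := S⁻¹ with hβ
  have hβpos : 0 < β := by positivity
  have hSβ : S * β = 1 := mul_inv_cancel₀ (ne_of_gt hSpos)
  set A : (Fin n → H) → (Fin n → (Fin lam' → Bool)) → ℝ :=
    fun g u => ∑ x, if (∀ i, ev (g i) (x i) = u i) then q x else 0 with hA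
  set B : (Fin n → H) → (Fin n → (Fin lam' → Bool)) → ℝ :=
    fun g u => if ∀ j ∉ J, u j = ev (g j) (w j) then β else 0 with hB
  set t : ℝ := (2:ℝ)^((lam':ℝ) - (1-δ)*lam) with hts
  -- cardinality of the support set
  have hcardY : (Fintype.card (Fin lam' → Bool) : ℝ) = (2:ℝ)^lam' := by
    simp
  have hcard : ∀ z : Fin n → (Fin lam' → Bool),
      (((Finset.univ.filter (fun u : Fin n → (Fin lam' → Bool) => ∀ j ∉ J, u j = z j)).card : ℝ)) = S := by
    intro z
    rw [count_fixed J z]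
    push_cast
    rw [hcardY, hS]
  -- A vanishes off the support set
  have hA0 : ∀ g u, ¬(∀ j ∉ J, u j = ev (g j) (w j)) → A g u = 0 := by
    intro g u hu
    refine Finset.sum_eq_zero fun x _ => ?_
    split_ifs with h
    · by_contra hqx
      exact hu fun j hj => (h j).symm.trans (by rw [hsupp x hqx j hj])
    · rfl
  have hAnn : ∀ g u, 0 ≤ A g u :=
    fun g u => Finset.sum_nonneg fun x _ => by split_ifs; exacts [hq0 x, le_refl 0]
  have hAsum : ∀ g, ∑ u, A g u = 1 := by
    intro g
    rw [hA]
    rw [Finset.sum_comm]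
    rw [← hq1]
    refine Finset.sum_congr rfl fun x _ => ?_
    have h1 : ∀ u : Fin n → (Fin lam' → Bool), (∀ i, ev (g i) (x i) = u i) ↔ ((fun i => ev (g i) (x i)) = u) :=
      fun u => funext_iff.symm
    simp_rw [h1]
    rw [Finset.sum_ite_eq Finset.univ (fun i => ev (g i) (x i)) (fun _ => q x)]
    simp
  -- second moment identity per g
  have hBsq : ∀ g, ∑ u, (B g u)^2 = β := by
    intro g
    have h1 : ∀ u, (B g u)^2 = if (∀ j ∉ J, u j = ev (g j) (w j)) then β^2 else 0 := by
      intro u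
      by_cases h : ∀ j ∉ J, u j = ev (g j) (w j) <;> rw [hB] <;> simp [h]
    simp_rw [h1]
    rw [Finset.sum_ite, Finset.sum_const, Finset.sum_const_zero, add_zero, nsmul_eq_mul]
    rw [hcard (fun j => ev (g j) (w j))]
    rw [hβ]
    field_simp
  have hAB : ∀ g, ∑ u, A g u * B g u = β := by
    intro g
    have h1 : ∀ u, A g u * B g u = β * A g u := by
      intro u
      by_cases h : ∀ j ∉ J, u j = ev (g j) (w j)
      · simp only [hB]; rw [if_pos h]; ring
      · simp only [hB]; rw [if_neg h, mul_zero, hA0 g u h, mul_zero]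
    simp_rw [h1]
    rw [← Finset.mul_sum, hAsum g, mul_one]
  have hQid : ∀ g, ∑ u, (A g u - B g u)^2 = (∑ u, (A g u)^2) - β := by
    intro g
    have h1 : ∀ u, (A g u - B g u)^2 = (A g u)^2 - 2*(A g u * B g u) + (B g u)^2 :=
      fun u => by ring
    simp_rw [h1]
    rw [Finset.sum_add_distrib, Finset.sum_sub_distrib, ← Finset.mul_sum, hAB, hBsq]
    ring
  -- expand the second moment
  have hAA : ∀ g, ∑ u, (A g u)^2
      = ∑ x, ∑ x', (q x * q x') *
          (if ∀ i, ev (g i) (x' i) = ev (g i) (x i) then (1:ℝ) else 0) := by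
    intro g
    have h2 : ∀ u, (A g u)^2 = ∑ x, ∑ x',
        (if (∀ i, ev (g i) (x i) = u i) then q x else 0) *
          (if (∀ i, ev (g i) (x' i) = u i) then q x' else 0) := by
      intro u; rw [sq, hA, Finset.sum_mul_sum]
    simp_rw [h2]
    rw [Finset.sum_comm]
    refine Finset.sum_congr rfl fun x _ => ?_
    rw [Finset.sum_comm]
    refine Finset.sum_congr rfl fun x' _ => ?_
    have h3 : ∀ u : Fin n → (Fin lam' → Bool),
        (if (∀ i, ev (g i) (x i) = u i) then q x else 0) *
          (if (∀ i, ev (g i) (x' i) = u i) then q x' else 0)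
        = if (fun i => ev (g i) (x i)) = u then
            (if ∀ i, ev (g i) (x' i) = ev (g i) (x i) then q x * q x' else 0) else 0 := by
      intro u
      by_cases h1 : ∀ i, ev (g i) (x i) = u i
      · rw [if_pos h1, if_pos (funext h1)]
        by_cases hh2 : ∀ i, ev (g i) (x' i) = u i
        · rw [if_pos hh2, if_pos fun i => (hh2 i).trans (h1 i).symm]
        · rw [if_neg hh2, mul_zero, if_neg fun hcon => hh2 fun i => (hcon i).trans (h1 i)]
      · rw [if_neg h1, zero_mul, if_neg fun hcon => h1 (funext_iff.mp hcon)]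
    rw [Finset.sum_congr rfl fun u _ => h3 u]
    rw [Finset.sum_ite_eq Finset.univ (fun i => ev (g i) (x i))
      (fun _ => if ∀ i, ev (g i) (x' i) = ev (g i) (x i) then q x * q x' else 0)]
    by_cases h4 : ∀ i, ev (g i) (x' i) = ev (g i) (x i) <;> simp [h4]
  -- the per-coordinate collision probability
  set N : (Fin n → (Fin lam → Bool)) → (Fin n → (Fin lam → Bool)) → Fin n → ℝ :=
    fun x x' i => ((Finset.univ.filter (fun h : H => ev h (x' i) = ev h (x i))).card : ℝ)
      / (Fintype.card H : ℝ) with hN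
  have hchi : ∀ x x' : Fin n → (Fin lam → Bool),
      (∑ g : Fin n → H, (if ∀ i, ev (g i) (x' i) = ev (g i) (x i) then (1:ℝ) else 0)) * c
        = ∏ i, N x x' i := by
    intro x x'
    have h1 : ∀ g : Fin n → H,
        (if ∀ i, ev (g i) (x' i) = ev (g i) (x i) then (1:ℝ) else 0)
          = ∏ i, (if ev (g i) (x' i) = ev (g i) (x i) then (1:ℝ) else 0) :=
      fun g => by rw [Fintype.prod_boole]; congr
    simp_rw [h1]
    rw [← Fintype.prod_sum (fun i (h : H) => if ev h (x' i) = ev h (x i) then (1:ℝ) else 0)]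
    rw [hN]
    rw [Finset.prod_div_distrib, Finset.prod_const, Finset.card_univ, Fintype.card_fin]
    rw [div_eq_mul_inv, hc]
    congr 1
    refine Finset.prod_congr rfl fun i _ => ?_
    rw [Finset.sum_boole]
  set ε : ℝ := (2:ℝ)^(-(lam':ℝ)) with hε
  have hεpos : 0 < ε := Real.rpow_pos_of_pos (by norm_num) _
  have hN0 : ∀ x x' i, 0 ≤ N x x' i := fun x x' i => by
    simp only [hN]; positivity
  have hN1 : ∀ x x' i, N x x' i ≤ 1 := fun x x' i => by
    simp only [hN]
    rw [div_le_one hHpos]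
    exact_mod_cast Finset.card_le_card (Finset.subset_univ _) |>.trans (le_of_eq Finset.card_univ)
  have hNe : ∀ x x' : Fin n → (Fin lam → Bool), ∀ i, x' i = x i → N x x' i = 1 := by
    intro x x' i h
    simp only [hN]
    have : (Finset.univ.filter (fun h' : H => ev h' (x' i) = ev h' (x i))) = Finset.univ := by
      refine Finset.filter_true_of_mem fun h' _ => by rw [h]
    rw [this, Finset.card_univ, div_self (ne_of_gt hHpos)]
  have hNne : ∀ x x' : Fin n → (Fin lam → Bool), ∀ i, x' i ≠ x i → N x x' i ≤ ε := by
    intro x x' i h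
    simp only [hN]
    rw [div_le_iff₀ hHpos]
    calc ((Finset.univ.filter (fun h' : H => ev h' (x' i) = ev h' (x i))).card : ℝ)
        ≤ (Fintype.card H : ℝ) * (2:ℝ)^(-(lam':ℝ)) := huniv (x' i) (x i) h
      _ = ε * (Fintype.card H : ℝ) := by rw [hε]; ring
  have hrho : ∀ x x', q x ≠ 0 → q x' ≠ 0 →
      ∏ i, N x x' i ≤ ∑ I ∈ J.powerset,
        (if ∀ i ∈ I, x' i = x i then (1:ℝ) else 0) * ε^((J \ I).card) := by
    intro x x' hx hx'
    have hsplit : (∏ i ∈ J, N x x' i) * ∏ i ∈ Jᶜ, N x x' i = ∏ i, N x x' i :=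
      Finset.prod_mul_prod_compl J _
    have hcompl : ∏ i ∈ Jᶜ, N x x' i = 1 :=
      Finset.prod_eq_one fun i hi => hNe x x' i (by
        rw [hsupp x' hx' i (Finset.mem_compl.mp hi), hsupp x hx i (Finset.mem_compl.mp hi)])
    have hJle : ∏ i ∈ J, N x x' i ≤ ∏ i ∈ J, ((if x' i = x i then (1:ℝ) else 0) + ε) := by
      refine Finset.prod_le_prod (fun i _ => hN0 x x' i) (fun i _ => ?_)
      by_cases h : x' i = x i
      · rw [if_pos h]; linarith [hN1 x x' i]
      · rw [if_neg h]; linarith [hNne x x' i h]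
    rw [← hsplit, hcompl, mul_one]
    refine hJle.trans (le_of_eq ?_)
    rw [Finset.prod_add]
    refine Finset.sum_congr rfl fun I _ => ?_
    rw [Finset.prod_boole, Finset.prod_const]
    congr
  have hcsum : ∑ _g : Fin n → H, c = 1 := by
    rw [Finset.sum_const, Finset.card_univ, nsmul_eq_mul, hc, Fintype.card_fun,
      Fintype.card_fin]
    push_cast
    exact mul_inv_cancel₀ (by positivity)
  set E : ℝ := ∑ g : Fin n → H, c * ∑ u, (A g u - B g u)^2 with hE
  have hEbound : E ≤ (∑ I ∈ J.powerset,
      (2:ℝ)^(-((1-δ)*I.card*lam)) * ε^((J \ I).card)) - β := by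
    have h1 : E = (∑ x, ∑ x', (q x * q x') * ∏ i, N x x' i) - β := by
      rw [hE]
      have e1 : ∀ g : Fin n → H, c * ∑ u, (A g u - B g u)^2
          = (∑ x, ∑ x', (q x * q x') *
              ((if ∀ i, ev (g i) (x' i) = ev (g i) (x i) then (1:ℝ) else 0) * c)) - c * β := by
        intro g
        rw [hQid g, mul_sub, hAA g, Finset.mul_sum]
        congr 1
        refine Finset.sum_congr rfl fun x _ => ?_
        rw [Finset.mul_sum]
        exact Finset.sum_congr rfl fun x' _ => by ring
      simp_rw [e1]
      rw [Finset.sum_sub_distrib]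
      congr 1
      · rw [Finset.sum_comm]
        refine Finset.sum_congr rfl fun x _ => ?_
        rw [Finset.sum_comm]
        refine Finset.sum_congr rfl fun x' _ => ?_
        rw [← Finset.mul_sum, ← Finset.sum_mul, hchi x x']
      · rw [← Finset.sum_mul, hcsum, one_mul]
    rw [h1]
    refine sub_le_sub_right ?_ β
    calc ∑ x, ∑ x', (q x * q x') * ∏ i, N x x' i
        ≤ ∑ x, ∑ x', (q x * q x') * ∑ I ∈ J.powerset,
            (if ∀ i ∈ I, x' i = x i then (1:ℝ) else 0) * ε^((J \ I).card) := by
          refine Finset.sum_le_sum fun x _ => Finset.sum_le_sum fun x' _ => ?_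
          by_cases hx : q x = 0
          · simp [hx]
          · by_cases hx' : q x' = 0
            · simp [hx']
            · exact mul_le_mul_of_nonneg_left (hrho x x' hx hx')
                (mul_nonneg (hq0 x) (hq0 x'))
      _ = ∑ I ∈ J.powerset,
            (∑ x, q x * (∑ x', (if ∀ i ∈ I, x' i = x i then q x' else 0))) * ε^((J \ I).card) := by
          simp_rw [Finset.mul_sum]
          have e2 : ∀ x : Fin n → (Fin lam → Bool),
              (∑ x', ∑ I ∈ J.powerset, (q x * q x') *
                ((if ∀ i ∈ I, x' i = x i then (1:ℝ) else 0) * ε^((J \ I).card)))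
              = ∑ I ∈ J.powerset, ∑ x', (q x * q x') *
                ((if ∀ i ∈ I, x' i = x i then (1:ℝ) else 0) * ε^((J \ I).card)) :=
            fun x => Finset.sum_comm
          simp_rw [e2]
          rw [Finset.sum_comm]
          refine Finset.sum_congr rfl fun I _ => ?_
          rw [Finset.sum_mul]
          refine Finset.sum_congr rfl fun x _ => ?_
          rw [Finset.sum_mul]
          refine Finset.sum_congr rfl fun x' _ => ?_
          by_cases h : ∀ i ∈ I, x' i = x i
          · rw [if_pos h, if_pos h]; ring
          · rw [if_neg h, if_neg h]; ring
      _ ≤ ∑ I ∈ J.powerset, (2:ℝ)^(-((1-δ)*I.card*lam)) * ε^((J \ I).card) := by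
          refine Finset.sum_le_sum fun I hI => ?_
          refine mul_le_mul_of_nonneg_right ?_ (by positivity)
          calc ∑ x, q x * (∑ x', if ∀ i ∈ I, x' i = x i then q x' else 0)
              ≤ ∑ x, q x * (2:ℝ)^(-((1-δ)*I.card*lam)) :=
                Finset.sum_le_sum fun x _ => mul_le_mul_of_nonneg_left
                  (hdense I (Finset.mem_powerset.mp hI) x) (hq0 x)
            _ = (2:ℝ)^(-((1-δ)*I.card*lam)) := by rw [← Finset.sum_mul, hq1, one_mul]
  have two_pos : (0:ℝ) < 2 := by norm_num
  have hSE : S * E ≤ (1+t)^(J.card) - 1 := by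
    have h3 : ∀ I ∈ J.powerset,
        S * ((2:ℝ)^(-((1-δ)*I.card*lam)) * ε^((J \ I).card)) = t^(I.card) := by
      intro I hI
      have hIJ := Finset.mem_powerset.mp hI
      have hc1 : (J \ I).card = J.card - I.card := Finset.card_sdiff_of_subset hIJ
      have hcle : I.card ≤ J.card := Finset.card_le_card hIJ
      rw [hS, hε, hts, hc1]
      rw [show ((2:ℝ)^lam') = (2:ℝ)^((lam':ℕ):ℝ) from (Real.rpow_natCast 2 lam').symm]
      rw [← Real.rpow_natCast ((2:ℝ)^((lam':ℕ):ℝ)) J.card,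
        ← Real.rpow_natCast ((2:ℝ)^(-((lam':ℕ):ℝ))) (J.card - I.card),
        ← Real.rpow_natCast ((2:ℝ)^((lam':ℝ) - (1-δ)*lam)) I.card]
      rw [← Real.rpow_mul two_pos.le, ← Real.rpow_mul two_pos.le,
        ← Real.rpow_mul two_pos.le]
      rw [← Real.rpow_add two_pos, ← Real.rpow_add two_pos]
      congr 1
      push_cast [hcle]
      ring
    calc S * E ≤ S * ((∑ I ∈ J.powerset,
          (2:ℝ)^(-((1-δ)*I.card*lam)) * ε^((J \ I).card)) - β) :=
        mul_le_mul_of_nonneg_left hEbound hSpos.le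
      _ = (∑ I ∈ J.powerset, t^(I.card)) - 1 := by
          rw [mul_sub, hSβ, Finset.mul_sum]
          congr 1
          exact Finset.sum_congr rfl h3
      _ = (1+t)^(J.card) - 1 := by
          congr 1
          have hpa := Finset.prod_add (fun _ : Fin n => t) (fun _ : Fin n => (1:ℝ)) J
          simp only [Finset.prod_const, one_pow, mul_one] at hpa
          rw [show (1:ℝ)+t = t+1 by ring, hpa]
  -- Cauchy-Schwarz over u, per g
  have hEnn : 0 ≤ E := Finset.sum_nonneg fun g _ =>
    mul_nonneg hcpos.le (Finset.sum_nonneg fun u _ => sq_nonneg _)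
  have hCS1 : ∀ g : Fin n → H, ∑ u, |A g u - B g u|
      ≤ Real.sqrt S * Real.sqrt (∑ u, (A g u - B g u)^2) := by
    intro g
    refine abs_sum_le (fun u : Fin n → (Fin lam' → Bool) => ∀ j ∉ J, u j = ev (g j) (w j))
      (fun u => A g u - B g u) (fun u hu => ?_) S (hcard (fun j => ev (g j) (w j)))
    show A g u - B g u = 0
    rw [hA0 g u hu]
    simp only [hB]
    rw [if_neg hu]
    ring
  have main : ∑ g : Fin n → H, ∑ u, c * |A g u - B g u|
      ≤ Real.sqrt ((1+t)^(J.card) - 1) := by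
    calc ∑ g : Fin n → H, ∑ u, c * |A g u - B g u|
        ≤ ∑ g : Fin n → H, c * (Real.sqrt S * Real.sqrt (∑ u, (A g u - B g u)^2)) := by
          refine Finset.sum_le_sum fun g _ => ?_
          rw [← Finset.mul_sum]
          exact mul_le_mul_of_nonneg_left (hCS1 g) hcpos.le
      _ = Real.sqrt S * ∑ g : Fin n → H,
            Real.sqrt c * Real.sqrt (c * ∑ u, (A g u - B g u)^2) := by
          have hfac : ∀ T : ℝ, c * Real.sqrt T = Real.sqrt c * Real.sqrt (c*T) := by
            intro T
            calc c * Real.sqrt T = (Real.sqrt c * Real.sqrt c) * Real.sqrt T := by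
                  rw [Real.mul_self_sqrt hcpos.le]
              _ = Real.sqrt c * Real.sqrt (c*T) := by rw [Real.sqrt_mul hcpos.le, mul_assoc]
          rw [Finset.mul_sum]
          refine Finset.sum_congr rfl fun g _ => ?_
          rw [← hfac]
          ring
      _ ≤ Real.sqrt S * (Real.sqrt (∑ _g : Fin n → H, c) * Real.sqrt E) := by
          refine mul_le_mul_of_nonneg_left ?_ (Real.sqrt_nonneg S)
          rw [hE]
          exact Real.sum_sqrt_mul_sqrt_le _ (fun g => hcpos.le)
            (fun g => mul_nonneg hcpos.le (Finset.sum_nonneg fun u _ => sq_nonneg _))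
      _ ≤ Real.sqrt ((1+t)^(J.card) - 1) := by
          rw [hcsum, Real.sqrt_one, one_mul, ← Real.sqrt_mul hSpos.le]
          exact Real.sqrt_le_sqrt hSE
  have goal' : (1/2) * ∑ g : Fin n → H, ∑ u, c * |A g u - B g u|
      ≤ (1/2) * Real.sqrt ((1 + t)^(J.card) - 1) := by linarith
  exact goal'

set_option maxHeartbeats 1000000 in
/-- If `X` is a convex combination of `(k, 1-δ)`-dense sources over `({0,1}^λ)^n`, `G`
is uniform over `𝒢^n` for a universal hash family `𝒢` with range `{0,1}^λ'`, and
`(1-δ)λ > λ' + log₂ n + 1`, then there is a family `{V_g}` of convex combinations of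
`k`-bit-fixing `(n, 2^λ')`-sources with
`Δ[(G, G(X)), (G, V_G)] ≤ √(2^{-(1-δ)λ + λ' + log₂ n})`. -/
theorem stmt_18 {n lam lam' : ℕ} {H : Type*} [Fintype H] [Nonempty H]
    (δ k : ℝ)
    (ev : H → (Fin lam → Bool) → (Fin lam' → Bool))
    (huniv : ∀ x y : Fin lam → Bool, x ≠ y →
      ((Finset.univ.filter (fun g : H => ev g x = ev g y)).card : ℝ)
        ≤ (Fintype.card H : ℝ) * (2 : ℝ) ^ (-(lam' : ℝ)))
    {ι : Type*} [Fintype ι]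
    (wt : ι → ℝ) (hwt : ∀ i, 0 ≤ wt i) (hwsum : ∑ i, wt i = 1)
    (q : ι → (Fin n → (Fin lam → Bool)) → ℝ)
    (hqdist : ∀ i, (∀ x, 0 ≤ q i x) ∧ (∑ x, q i x = 1))
    (hqdense : ∀ i, IsKDense k δ (q i))
    (p : (Fin n → (Fin lam → Bool)) → ℝ)
    (hX : ∀ x, p x = ∑ i, wt i * q i x)
    (hcond : (1 - δ) * lam > lam' + Real.logb 2 n + 1) :
    ∃ V : (Fin n → H) → (Fin n → (Fin lam' → Bool)) → ℝ,
      (∀ g, IsConvexCombBitFixing k (V g)) ∧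
      (1 / 2) * ∑ g : Fin n → H, ∑ u : Fin n → (Fin lam' → Bool),
          |((Fintype.card H : ℝ) ^ n)⁻¹ *
              (∑ x, if (∀ i, ev (g i) (x i) = u i) then p x else 0)
            - ((Fintype.card H : ℝ) ^ n)⁻¹ * V g u|
        ≤ Real.sqrt ((2 : ℝ) ^ (-(1 - δ) * lam + lam' + Real.logb 2 n)) := by
  classical
  choose J hJ using hqdense
  choose w hw using fun i => (hJ i).2.1
  set c : ℝ := ((Fintype.card H : ℝ)^n)⁻¹ with hc
  have hcnn : (0:ℝ) ≤ c := by positivity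
  set B : ι → (Fin n → H) → (Fin n → (Fin lam' → Bool)) → ℝ := fun i g u =>
    if ∀ j ∉ J i, u j = ev (g j) (w i j) then (((2:ℝ)^lam')^(J i).card)⁻¹ else 0 with hB
  set A : ι → (Fin n → H) → (Fin n → (Fin lam' → Bool)) → ℝ := fun i g u =>
    ∑ x, if (∀ j, ev (g j) (x j) = u j) then q i x else 0 with hA
  refine ⟨fun g u => ∑ i, wt i * B i g u, ?_, ?_⟩
  · intro g
    set e := (Fintype.equivFin ι).symm with he
    refine ⟨Fintype.card ι, fun j => wt (e j), fun j u => B (e j) g u,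
      fun j => hwt _, ?_, ?_, ?_⟩
    · rw [Equiv.sum_comp e wt]; exact hwsum
    · intro j
      exact ⟨J (e j), (hJ (e j)).1, fun j' => ev (g j') (w (e j) j'), fun u => rfl⟩
    · intro u
      exact (Equiv.sum_comp e (fun i => wt i * B i g u)).symm
  · -- the distance bound
    have hkey : ∀ i : ι, (1/2) * ∑ g : Fin n → H, ∑ u : Fin n → (Fin lam' → Bool),
        c * |A i g u - B i g u|
        ≤ Real.sqrt ((2 : ℝ) ^ (-(1 - δ) * lam + lam' + Real.logb 2 n)) := by
      intro i
      refine (core δ ev huniv (q i) (hqdist i).1 (hqdist i).2 (J i) (w i) (hw i)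
        (hJ i).2.2).trans ?_
      refine final_num δ (J i).card ?_ hcond
      simpa using Finset.card_le_univ (J i)
    have hsplit : ∀ (g : Fin n → H) (u : Fin n → (Fin lam' → Bool)),
        (∑ x, if (∀ j, ev (g j) (x j) = u j) then p x else 0) = ∑ i, wt i * A i g u := by
      intro g u
      calc ∑ x, (if (∀ j, ev (g j) (x j) = u j) then p x else 0)
          = ∑ x, ∑ i, wt i * (if (∀ j, ev (g j) (x j) = u j) then q i x else 0) := by
            refine Finset.sum_congr rfl fun x _ => ?_
            by_cases h : ∀ j, ev (g j) (x j) = u j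
            · simp only [if_pos h]; exact hX x
            · simp only [if_neg h, mul_zero]; simp
        _ = ∑ i, wt i * A i g u := by
            rw [Finset.sum_comm]
            refine Finset.sum_congr rfl fun i _ => ?_
            rw [hA, ← Finset.mul_sum]
    have habs : ∀ (g : Fin n → H) (u : Fin n → (Fin lam' → Bool)),
        |c * (∑ x, if (∀ j, ev (g j) (x j) = u j) then p x else 0)
          - c * ∑ i, wt i * B i g u| ≤ ∑ i, wt i * (c * |A i g u - B i g u|) := by
      intro g u
      rw [hsplit g u]
      calc |c * ∑ i, wt i * A i g u - c * ∑ i, wt i * B i g u|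
          = |∑ i, wt i * (c * (A i g u - B i g u))| := by
            rw [Finset.mul_sum, Finset.mul_sum, ← Finset.sum_sub_distrib]
            congr 1
            exact Finset.sum_congr rfl fun i _ => by ring
        _ ≤ ∑ i, |wt i * (c * (A i g u - B i g u))| := Finset.abs_sum_le_sum_abs _ _
        _ = ∑ i, wt i * (c * |A i g u - B i g u|) := by
            refine Finset.sum_congr rfl fun i _ => ?_
            rw [abs_mul, abs_mul, abs_of_nonneg (hwt i), abs_of_nonneg hcnn]
    calc (1/2) * ∑ g : Fin n → H, ∑ u : Fin n → (Fin lam' → Bool),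
          |c * (∑ x, if (∀ j, ev (g j) (x j) = u j) then p x else 0)
            - c * ∑ i, wt i * B i g u|
        ≤ (1/2) * ∑ g : Fin n → H, ∑ u : Fin n → (Fin lam' → Bool),
            ∑ i, wt i * (c * |A i g u - B i g u|) := by
          refine mul_le_mul_of_nonneg_left ?_ (by norm_num)
          exact Finset.sum_le_sum fun g _ => Finset.sum_le_sum fun u _ => habs g u
      _ = ∑ i, wt i * ((1/2) * ∑ g : Fin n → H, ∑ u : Fin n → (Fin lam' → Bool),
            c * |A i g u - B i g u|) := by
          have e1 : ∀ g : Fin n → H, (∑ u : Fin n → (Fin lam' → Bool),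
              ∑ i, wt i * (c * |A i g u - B i g u|))
              = ∑ i, ∑ u : Fin n → (Fin lam' → Bool), wt i * (c * |A i g u - B i g u|) :=
            fun g => Finset.sum_comm
          simp_rw [e1]
          rw [Finset.sum_comm, Finset.mul_sum]
          refine Finset.sum_congr rfl fun i _ => ?_
          simp_rw [← Finset.mul_sum]
          ring
      _ ≤ ∑ i, wt i * Real.sqrt ((2 : ℝ) ^ (-(1 - δ) * lam + lam' + Real.logb 2 n)) :=
          Finset.sum_le_sum fun i _ => mul_le_mul_of_nonneg_left (hkey i) (hwt i)
      _ = Real.sqrt ((2 : ℝ) ^ (-(1 - δ) * lam + lam' + Real.logb 2 n)) := by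
          rw [← Finset.sum_mul, hwsum, one_mul]
end

section
/- Key leakage lemma: let F : (\{0,1\}^\lambda)^n \to \{0,1\}^s be arbitrary, X uniform over (\{0,1\}^\lambda)^n, Z = F(X), G uniform over \mathcal{G}^n for a universal hash family \mathcal{G} with range \{0,1\}^{\lambda'}, independent of X. Given \delta, \gamma > 0 and s' > s with (1-\delta)\lambda > \lambda' + \log_2 n + 1, and assuming the dense-decomposition lemma (any conditioned source with deficiency at most s' is \gamma-close to a convex combination of (k, 1-\delta)-dense sources for k = (s' + \log_2(1/\gamma))/(\delta\lambda)), there exists a family V_{G,Z} of convex combinations of k-bit-fixing (n, 2^{\lambda'})-sources such that \Delta[(G, Z, G(X)), (G, Z, V_{G,Z})] \leq \sqrt{2^{-(1-\delta)\lambda + \lambda' + \log_2 n}} + \gamma + 2^{s - s'}. -/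
/-- A convex combination of `(k, 1-δ)`-dense sources (each a distribution). -/
def IsConvexCombKDense {n lam : ℕ} (k δ : ℝ)
    (W : (Fin n → (Fin lam → Bool)) → ℝ) : Prop :=
  ∃ (m : ℕ) (wt : Fin m → ℝ) (q : Fin m → (Fin n → (Fin lam → Bool)) → ℝ),
    (∀ i, 0 ≤ wt i) ∧ (∑ i, wt i = 1) ∧
    (∀ i, (∀ x, 0 ≤ q i x) ∧ (∑ x, q i x = 1) ∧ IsKDense k δ (q i)) ∧
    ∀ x, W x = ∑ i, wt i * q i x

/-!
Conditioned on `Z = z`, the source `X_z` is either rare (`Pr[Z = z] ≤ 2^{-s'}`, so at most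
`2^{s-s'}` in total) or has deficiency at most `s'`, and is then `γ`-close to a convex
combination of `(k, 1-δ)`-dense sources. Hashing does not increase statistical distance, so it
suffices to hash a single source `q` that is dense on `J` and fixed to `w` off `J`. Averaged over
the hash functions, two independent samples of `q` collide after hashing with probability at most
`(2^{-λ'} + 2^{-(1-δ)λ})^{|J|}`, which is `(1 + ε)^{|J|}` times the collision probability of the
uniform distribution on the outputs that agree with the hash of `w` off `J` (a bit-fixing source),
where `ε = 2^{λ' - (1-δ)λ}`. By Cauchy–Schwarz the distance to that source is then at most
`√((1 + ε)^n - 1) / 2 ≤ √(nε)`.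
-/

open Finset

section Pushforward

variable {α β : Type*} [Fintype α] [DecidableEq β]

def pushforward (f : α → β) (p : α → ℝ) (b : β) : ℝ :=
  ∑ a, if f a = b then p a else 0

variable {f : α → β} {p q : α → ℝ}

lemma pushforward_nonneg (hp : ∀ a, 0 ≤ p a) (b : β) : 0 ≤ pushforward f p b :=
  sum_nonneg fun a _ => by split_ifs <;> simp [hp a]

lemma pushforward_eq_zero {S : Finset β} (hS : ∀ a, p a ≠ 0 → f a ∈ S) {b : β} (hb : b ∉ S) :
    pushforward f p b = 0 :=
  sum_eq_zero fun a _ => by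
    split_ifs with h
    · by_contra hpa
      exact hb (h ▸ hS a hpa)
    · rfl

lemma pushforward_sum_mul {ι : Type*} [Fintype ι] (w : ι → ℝ) (q : ι → α → ℝ) (b : β) :
    pushforward f (fun a => ∑ i, w i * q i a) b = ∑ i, w i * pushforward f (q i) b := by
  simp only [pushforward, mul_sum]
  rw [sum_comm]
  refine sum_congr rfl fun a _ => ?_
  split_ifs <;> simp

variable [Fintype β]

lemma sum_pushforward : ∑ b, pushforward f p b = ∑ a, p a := by
  simp only [pushforward]
  rw [sum_comm]
  simp

lemma sum_abs_pushforward_sub_le :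
    ∑ b, |pushforward f p b - pushforward f q b| ≤ ∑ a, |p a - q a| := by
  calc ∑ b, |pushforward f p b - pushforward f q b|
      = ∑ b, |pushforward f (fun a => p a - q a) b| := by
        simp only [pushforward, ← sum_sub_distrib, ite_sub_ite, sub_self]
    _ ≤ ∑ b, pushforward f (fun a => |p a - q a|) b :=
        sum_le_sum fun b _ => (abs_sum_le_sum_abs _ _).trans_eq
          (sum_congr rfl fun a _ => by split_ifs <;> simp)
    _ = ∑ a, |p a - q a| := sum_pushforward

lemma sum_pushforward_sq :
    ∑ b, pushforward f p b ^ 2 = ∑ a, ∑ a', p a * p a' * if f a = f a' then 1 else 0 := by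
  simp only [pushforward, sq, sum_mul_sum, ite_mul, mul_ite, zero_mul, mul_zero]
  rw [sum_comm]
  refine sum_congr rfl fun a _ => ?_
  rw [sum_comm]
  refine sum_congr rfl fun a' _ => ?_
  split_ifs with h <;> simp [h]

end Pushforward

section Uniform

variable {β : Type*} [DecidableEq β]

noncomputable def unifOn (S : Finset β) (b : β) : ℝ := if b ∈ S then ((#S : ℕ) : ℝ)⁻¹ else 0

lemma unifOn_nonneg (S : Finset β) (b : β) : 0 ≤ unifOn S b := by
  unfold unifOn; split_ifs <;> positivity

variable [Fintype β]

lemma sum_unifOn {S : Finset β} (hS : S.Nonempty) : ∑ b, unifOn S b = 1 := by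
  simp only [unifOn, sum_ite_mem, univ_inter, sum_const, nsmul_eq_mul]
  exact mul_inv_cancel₀ (Nat.cast_ne_zero.mpr hS.card_ne_zero)

lemma sq_sum_abs_sub_unifOn_le {S : Finset β} {p : β → ℝ} (hsupp : ∀ b ∉ S, p b = 0)
    (hp : ∑ b, p b = 1) :
    (∑ b, |p b - unifOn S b|) ^ 2 ≤ #S * ∑ b, p b ^ 2 - 1 := by
  have hsum : ∀ r : β → ℝ, (∀ b ∉ S, r b = 0) → ∑ b ∈ S, r b = ∑ b, r b := fun r hr =>
    sum_subset (subset_univ S) fun b _ hb => hr b hb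
  have hS : (#S : ℝ) ≠ 0 := by
    rintro h
    rw [Nat.cast_eq_zero, card_eq_zero] at h
    simp [← hsum p hsupp, h] at hp
  have hpS : ∑ b ∈ S, p b = 1 := by rw [hsum p hsupp, hp]
  rw [← hsum _ fun b hb => by simp [unifOn, hb, hsupp b hb],
    ← hsum _ fun b hb => by simp [hsupp b hb]]
  calc (∑ b ∈ S, |p b - unifOn S b|) ^ 2
      ≤ #S * ∑ b ∈ S, |p b - unifOn S b| ^ 2 := sq_sum_le_card_mul_sum_sq
    _ = #S * ∑ b ∈ S, (p b ^ 2 - 2 * (#S : ℝ)⁻¹ * p b + ((#S : ℝ)⁻¹) ^ 2) :=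
        congrArg _ (sum_congr rfl fun b hb => by simp only [sq_abs, unifOn, hb, if_true]; ring)
    _ = #S * ∑ b ∈ S, p b ^ 2 - 1 := by
        rw [sum_add_distrib, sum_sub_distrib, ← mul_sum, hpS, sum_const, nsmul_eq_mul]
        field_simp
        ring

end Uniform

lemma sum_abs_sub_le_two {β : Type*} [Fintype β] {p r : β → ℝ} (hp : ∀ b, 0 ≤ p b)
    (hr : ∀ b, 0 ≤ r b) (hp1 : ∑ b, p b = 1) (hr1 : ∑ b, r b = 1) :
    ∑ b, |p b - r b| ≤ 2 := by
  calc ∑ b, |p b - r b| ≤ ∑ b, (p b + r b) :=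
        sum_le_sum fun b _ => abs_sub_le_iff.mpr ⟨by linarith [hr b], by linarith [hp b]⟩
    _ = 2 := by rw [sum_add_distrib, hp1, hr1]; norm_num

lemma sum_abs_sum_mul_sub_le {ι β : Type*} [Fintype ι] [Fintype β] {w : ι → ℝ}
    (hw : ∀ i, 0 ≤ w i) (p r : ι → β → ℝ) :
    ∑ b, |∑ i, w i * p i b - ∑ i, w i * r i b| ≤ ∑ i, w i * ∑ b, |p i b - r i b| := by
  calc ∑ b, |∑ i, w i * p i b - ∑ i, w i * r i b|
      ≤ ∑ b, ∑ i, w i * |p i b - r i b| := sum_le_sum fun b _ => by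
        rw [← sum_sub_distrib]
        refine (abs_sum_le_sum_abs _ _).trans_eq (sum_congr rfl fun i _ => ?_)
        rw [← mul_sub, abs_mul, abs_of_nonneg (hw i)]
    _ = ∑ i, w i * ∑ b, |p i b - r i b| := by
        rw [sum_comm]; simp only [mul_sum]

section AgreeOutside

variable {ι β : Type*} [Fintype ι] [DecidableEq ι] [Fintype β] [DecidableEq β]

def agreeOutside (J : Finset ι) (w : ι → β) : Finset (ι → β) :=
  {u | ∀ j ∉ J, u j = w j}

lemma mem_agreeOutside {J : Finset ι} {w u : ι → β} :
    u ∈ agreeOutside J w ↔ ∀ j ∉ J, u j = w j := by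
  simp [agreeOutside]

lemma card_agreeOutside (J : Finset ι) (w : ι → β) :
    #(agreeOutside J w) = Fintype.card β ^ #J := by
  have : agreeOutside J w = Fintype.piFinset fun j => if j ∈ J then univ else {w j} := by
    ext u
    simp only [agreeOutside, mem_filter, mem_univ, true_and, Fintype.mem_piFinset]
    refine forall_congr' fun j => ?_
    split_ifs with hj <;> simp [hj]
  rw [this, Fintype.card_piFinset]
  simp [apply_ite Finset.card, prod_ite_mem]

lemma self_mem_agreeOutside (J : Finset ι) (w : ι → β) : w ∈ agreeOutside J w :=
  mem_agreeOutside.mpr fun _ _ => rfl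

end AgreeOutside

lemma avg_sqrt_le_sqrt_avg {G : Type*} [Fintype G] [Nonempty G] {t : G → ℝ}
    (ht : ∀ g, 0 ≤ t g) :
    (Fintype.card G : ℝ)⁻¹ * ∑ g, √(t g) ≤ √((Fintype.card G : ℝ)⁻¹ * ∑ g, t g) := by
  have hw : ∑ _g : G, (Fintype.card G : ℝ)⁻¹ = 1 := by
    rw [sum_const, card_univ, nsmul_eq_mul]
    exact mul_inv_cancel₀ (Nat.cast_ne_zero.mpr Fintype.card_ne_zero)
  simpa only [mul_sum, smul_eq_mul] using
    Real.strictConcaveOn_sqrt.concaveOn.le_map_sum (t := univ) (fun _ _ => by positivity) hw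
      (fun g _ => Set.mem_Ici.mpr (ht g))

lemma card_collision_le {α β H : Type*} [Fintype H] [DecidableEq α] [DecidableEq β]
    {ev : H → α → β} {b : ℝ} (hb : 0 ≤ b)
    (huniv : ∀ a a' : α, a ≠ a' → (#{h | ev h a = ev h a'} : ℝ) ≤ Fintype.card H * b)
    (a a' : α) :
    (#{h | ev h a = ev h a'} : ℝ) ≤ Fintype.card H * ((if a = a' then 1 else 0) + b) := by
  split_ifs with h
  · have : (#{h | ev h a = ev h a'} : ℝ) ≤ Fintype.card H := by exact_mod_cast card_filter_le _ _
    nlinarith [(Fintype.card H).cast_nonneg (α := ℝ)]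
  · simpa using huniv a a' h

def coordHash {ι α β H : Type*} (ev : H → α → β) (g : ι → H) (x : ι → α) : ι → β :=
  fun i => ev (g i) (x i)

lemma coordHash_eq_iff {ι α β H : Type*} {ev : H → α → β} {g : ι → H} {x : ι → α} {u : ι → β} :
    coordHash ev g x = u ↔ ∀ i, ev (g i) (x i) = u i :=
  funext_iff

section CoordHash

variable {ι α β H : Type*} [Fintype ι] [DecidableEq ι] [DecidableEq β] [Fintype H]
  {ev : H → α → β}

lemma sum_collision_coordHash (x y : ι → α) :
    ∑ g : ι → H, (if coordHash ev g x = coordHash ev g y then (1 : ℝ) else 0)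
      = ∏ i, (#{h | ev h (x i) = ev h (y i)} : ℝ) := by
  simp_rw [← sum_boole, Fintype.prod_sum, prod_boole]
  simp [coordHash, funext_iff]

lemma avg_collision_coordHash_le [DecidableEq α] [Nonempty H] {b : ℝ} (hb : 0 ≤ b)
    (huniv : ∀ a a' : α, a ≠ a' → (#{h | ev h a = ev h a'} : ℝ) ≤ Fintype.card H * b)
    {J : Finset ι} {x y : ι → α} (hxy : ∀ i ∉ J, x i = y i) :
    (Fintype.card (ι → H) : ℝ)⁻¹ *
        ∑ g : ι → H, (if coordHash ev g x = coordHash ev g y then (1 : ℝ) else 0)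
      ≤ ∏ i ∈ J, ((if x i = y i then 1 else 0) + b) := by
  have hH : (0 : ℝ) < Fintype.card H := by exact_mod_cast Fintype.card_pos
  have hcard : (Fintype.card (ι → H) : ℝ) = ∏ _i : ι, (Fintype.card H : ℝ) := by
    rw [prod_const, card_univ, Fintype.card_fun, Nat.cast_pow]
  have hratio : (Fintype.card (ι → H) : ℝ)⁻¹ *
        ∑ g : ι → H, (if coordHash ev g x = coordHash ev g y then (1 : ℝ) else 0)
      = ∏ i ∈ J, (#{h | ev h (x i) = ev h (y i)} : ℝ) / Fintype.card H := by
    rw [sum_collision_coordHash, hcard, inv_mul_eq_div, ← prod_div_distrib]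
    refine (prod_subset (subset_univ J) fun i _ hi => ?_).symm
    rw [hxy i hi, filter_true_of_mem fun _ _ => rfl, card_univ, div_self hH.ne']
  rw [hratio]
  refine prod_le_prod (fun i _ => by positivity) fun i _ => ?_
  rw [div_le_iff₀' hH]
  exact card_collision_le hb huniv _ _

end CoordHash

/-- Expanding the product over `J` turns each term into a weight `b ^ #(J \ t)` times the
probability that `y` agrees with `x` on `t ⊆ J`, which density bounds by `a ^ #t`. -/
lemma sum_sum_mul_prod_le_of_dense {ι α : Type*} [Fintype ι] [DecidableEq ι] [Fintype α]
    [DecidableEq α] {q : (ι → α) → ℝ} (hq0 : ∀ x, 0 ≤ q x) (hq1 : ∑ x, q x = 1)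
    {J : Finset ι} {a b : ℝ} (hb : 0 ≤ b)
    (hdense : ∀ t ⊆ J, ∀ v : ι → α, ∑ x, (if ∀ i ∈ t, x i = v i then q x else 0) ≤ a ^ #t) :
    ∑ x, ∑ y, q x * q y * ∏ i ∈ J, ((if x i = y i then 1 else 0) + b) ≤ (a + b) ^ #J := by
  have hexpand : ∀ x y : ι → α, q x * q y * ∏ i ∈ J, ((if x i = y i then 1 else 0) + b)
      = ∑ t ∈ J.powerset, q x * b ^ #(J \ t) * if ∀ i ∈ t, y i = x i then q y else 0 := by
    intro x y
    simp only [prod_add, prod_boole, prod_const, mul_sum]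
    refine sum_congr rfl fun t _ => ?_
    simp only [eq_comm (a := x _)]
    split_ifs <;> ring
  calc ∑ x, ∑ y, q x * q y * ∏ i ∈ J, ((if x i = y i then 1 else 0) + b)
      = ∑ x, ∑ t ∈ J.powerset, q x * b ^ #(J \ t) *
          ∑ y, if ∀ i ∈ t, y i = x i then q y else 0 := by
        simp only [hexpand, mul_sum]
        exact sum_congr rfl fun x _ => sum_comm
    _ ≤ ∑ x, ∑ t ∈ J.powerset, q x * b ^ #(J \ t) * a ^ #t :=
        sum_le_sum fun x _ => sum_le_sum fun t ht =>
          mul_le_mul_of_nonneg_left (hdense t (mem_powerset.mp ht) x)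
            (mul_nonneg (hq0 x) (pow_nonneg hb _))
    _ = (a + b) ^ #J := by
        simp only [mul_assoc, ← mul_sum, ← sum_mul, hq1, one_mul]
        rw [← prod_const, prod_add]
        exact sum_congr rfl fun t _ => by rw [prod_const, prod_const, mul_comm]

section LeftoverHash

variable {ι α β H : Type*} [Fintype ι] [DecidableEq ι] [Fintype α] [DecidableEq α]
  [Fintype β] [DecidableEq β] [Fintype H] [Nonempty H] {ev : H → α → β} {a b : ℝ}
  {q : (ι → α) → ℝ} {J : Finset ι} {w : ι → α}

lemma avg_sum_sq_pushforward_coordHash_le (hb : 0 ≤ b)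
    (huniv : ∀ a a' : α, a ≠ a' → (#{h | ev h a = ev h a'} : ℝ) ≤ Fintype.card H * b)
    (hq0 : ∀ x, 0 ≤ q x) (hq1 : ∑ x, q x = 1) (hsupp : ∀ x, q x ≠ 0 → ∀ i ∉ J, x i = w i)
    (hdense : ∀ t ⊆ J, ∀ v : ι → α, ∑ x, (if ∀ i ∈ t, x i = v i then q x else 0) ≤ a ^ #t) :
    (Fintype.card (ι → H) : ℝ)⁻¹ * ∑ g, ∑ u, pushforward (coordHash ev g) q u ^ 2
      ≤ (a + b) ^ #J := by
  refine le_trans ?_ (sum_sum_mul_prod_le_of_dense hq0 hq1 hb hdense)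
  simp only [sum_pushforward_sq]
  rw [sum_comm, mul_sum]
  refine sum_le_sum fun x _ => ?_
  rw [sum_comm, mul_sum]
  refine sum_le_sum fun y _ => ?_
  rw [← mul_sum, mul_left_comm]
  by_cases hxy : q x * q y = 0
  · simp [hxy]
  obtain ⟨hx, hy⟩ := mul_ne_zero_iff.mp hxy
  exact mul_le_mul_of_nonneg_left
    (avg_collision_coordHash_le hb huniv fun i hi => (hsupp x hx i hi).trans (hsupp y hy i hi).symm)
    (mul_nonneg (hq0 x) (hq0 y))

/-- The block-wise leftover hash lemma. -/
theorem avg_sum_abs_pushforward_coordHash_sub_unifOn_le (hb : 0 ≤ b)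
    (huniv : ∀ a a' : α, a ≠ a' → (#{h | ev h a = ev h a'} : ℝ) ≤ Fintype.card H * b)
    (hq0 : ∀ x, 0 ≤ q x) (hq1 : ∑ x, q x = 1) (hsupp : ∀ x, q x ≠ 0 → ∀ i ∉ J, x i = w i)
    (hdense : ∀ t ⊆ J, ∀ v : ι → α, ∑ x, (if ∀ i ∈ t, x i = v i then q x else 0) ≤ a ^ #t) :
    (Fintype.card (ι → H) : ℝ)⁻¹ * ∑ g, ∑ u,
        |pushforward (coordHash ev g) q u - unifOn (agreeOutside J (coordHash ev g w)) u|
      ≤ √((Fintype.card β * (a + b)) ^ #J - 1) := by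
  set M : ℝ := (Fintype.card β : ℝ) ^ #J
  set T : (ι → H) → ℝ := fun g => M * ∑ u, pushforward (coordHash ev g) q u ^ 2 - 1
  have hper : ∀ g, (∑ u, |pushforward (coordHash ev g) q u
      - unifOn (agreeOutside J (coordHash ev g w)) u|) ^ 2 ≤ T g := fun g => by
    have h := sq_sum_abs_sub_unifOn_le (S := agreeOutside J (coordHash ev g w))
      (p := pushforward (coordHash ev g) q)
      (fun u hu => pushforward_eq_zero (fun x hx => mem_agreeOutside.mpr fun i hi => by
        simp only [coordHash, hsupp x hx i hi]) hu)
      (by rw [sum_pushforward, hq1])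
    rwa [card_agreeOutside, Nat.cast_pow] at h
  have hT : ∀ g, 0 ≤ T g := fun g => (sq_nonneg _).trans (hper g)
  calc (Fintype.card (ι → H) : ℝ)⁻¹ * ∑ g, ∑ u,
        |pushforward (coordHash ev g) q u - unifOn (agreeOutside J (coordHash ev g w)) u|
      ≤ (Fintype.card (ι → H) : ℝ)⁻¹ * ∑ g, √(T g) :=
        mul_le_mul_of_nonneg_left (sum_le_sum fun g _ =>
          Real.le_sqrt_of_sq_le (hper g)) (by positivity)
    _ ≤ √((Fintype.card (ι → H) : ℝ)⁻¹ * ∑ g, T g) := avg_sqrt_le_sqrt_avg hT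
    _ ≤ √((Fintype.card β * (a + b)) ^ #J - 1) := by
        refine Real.sqrt_le_sqrt ?_
        have hcol := avg_sum_sq_pushforward_coordHash_le hb huniv hq0 hq1 hsupp hdense
        calc (Fintype.card (ι → H) : ℝ)⁻¹ * ∑ g, T g
            = M * ((Fintype.card (ι → H) : ℝ)⁻¹ * ∑ g, ∑ u, pushforward (coordHash ev g) q u ^ 2)
              - 1 := by
              simp only [T, sum_sub_distrib, ← mul_sum, sum_const, card_univ, nsmul_eq_mul]
              field_simp
          _ ≤ M * (a + b) ^ #J - 1 := by gcongr
          _ = (Fintype.card β * (a + b)) ^ #J - 1 := by rw [mul_pow]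

end LeftoverHash

lemma avg_sum_abs_pushforward_sub_mix_le {G α β ι : Type*} [Fintype G] [Nonempty G] [Fintype α]
    [Fintype β] [DecidableEq β] [Fintype ι] {f : G → α → β} {X W : α → ℝ} {wt : ι → ℝ}
    {q : ι → α → ℝ} {T : G → ι → β → ℝ} {B : ℝ}
    (hwt0 : ∀ i, 0 ≤ wt i) (hwt1 : ∑ i, wt i = 1) (hW : ∀ x, W x = ∑ i, wt i * q i x)
    (hB : ∀ i, (Fintype.card G : ℝ)⁻¹ * ∑ g, ∑ u, |pushforward (f g) (q i) u - T g i u| ≤ B) :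
    (Fintype.card G : ℝ)⁻¹ * ∑ g, ∑ u, |pushforward (f g) X u - ∑ i, wt i * T g i u|
      ≤ ∑ x, |X x - W x| + B := by
  have hc : (0 : ℝ) < (Fintype.card G : ℝ)⁻¹ := by
    simpa using Fintype.card_pos (α := G)
  have hper : ∀ g, ∑ u, |pushforward (f g) X u - ∑ i, wt i * T g i u|
      ≤ ∑ x, |X x - W x| + ∑ i, wt i * ∑ u, |pushforward (f g) (q i) u - T g i u| := fun g => by
    have hWmix : ∀ u, pushforward (f g) W u = ∑ i, wt i * pushforward (f g) (q i) u := fun u => by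
      rw [← pushforward_sum_mul, funext hW]
    calc ∑ u, |pushforward (f g) X u - ∑ i, wt i * T g i u|
        ≤ ∑ u, (|pushforward (f g) X u - pushforward (f g) W u|
            + |pushforward (f g) W u - ∑ i, wt i * T g i u|) :=
          sum_le_sum fun u _ => abs_sub_le _ _ _
      _ ≤ _ := by
          rw [sum_add_distrib]
          refine add_le_add sum_abs_pushforward_sub_le ?_
          simp only [hWmix]
          exact sum_abs_sum_mul_sub_le hwt0 _ _
  calc (Fintype.card G : ℝ)⁻¹ * ∑ g, ∑ u, |pushforward (f g) X u - ∑ i, wt i * T g i u|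
      ≤ (Fintype.card G : ℝ)⁻¹ * ∑ g, (∑ x, |X x - W x|
          + ∑ i, wt i * ∑ u, |pushforward (f g) (q i) u - T g i u|) :=
        mul_le_mul_of_nonneg_left (sum_le_sum fun g _ => hper g) hc.le
    _ = ∑ x, |X x - W x| + ∑ i, wt i *
          ((Fintype.card G : ℝ)⁻¹ * ∑ g, ∑ u, |pushforward (f g) (q i) u - T g i u|) := by
        rw [sum_add_distrib, mul_add, sum_const, card_univ, nsmul_eq_mul, ← mul_assoc,
          inv_mul_cancel₀ (inv_pos.mp hc).ne', one_mul, sum_comm]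
        simp only [mul_sum]
        exact congrArg _ (sum_congr rfl fun i _ => sum_congr rfl fun g _ =>
          sum_congr rfl fun u _ => mul_left_comm _ _ _)
    _ ≤ ∑ x, |X x - W x| + ∑ i, wt i * B :=
        add_le_add_right (sum_le_sum fun i _ => mul_le_mul_of_nonneg_left (hB i) (hwt0 i)) _
    _ = ∑ x, |X x - W x| + B := by rw [← sum_mul, hwt1, one_mul]

lemma half_sqrt_one_add_pow_sub_one_le {ε : ℝ} (hε : 0 ≤ ε) {n : ℕ} (hnε : n * ε ≤ 1) :
    √((1 + ε) ^ n - 1) / 2 ≤ √(n * ε) := by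
  have hnε0 : 0 ≤ n * ε := mul_nonneg n.cast_nonneg hε
  have hexp : (1 + ε) ^ n - 1 ≤ 2 * (n * ε) := by
    have h := Real.abs_exp_sub_one_le (x := n * ε) (by rwa [abs_of_nonneg hnε0])
    have hpow : (1 + ε) ^ n ≤ Real.exp (n * ε) :=
      calc (1 + ε) ^ n ≤ Real.exp ε ^ n :=
            pow_le_pow_left₀ (by linarith) (by linarith [Real.add_one_le_exp ε]) n
        _ = Real.exp (n * ε) := (Real.exp_nat_mul ε n).symm
    rw [abs_of_nonneg hnε0] at h
    linarith [le_abs_self (Real.exp (n * ε) - 1)]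
  rw [div_le_iff₀ two_pos]
  calc √((1 + ε) ^ n - 1) ≤ √(2 ^ 2 * (n * ε)) := Real.sqrt_le_sqrt (by linarith)
    _ = √(n * ε) * 2 := by rw [Real.sqrt_mul (by positivity), Real.sqrt_sq two_pos.le, mul_comm]

lemma natCast_mul_two_rpow_le (n : ℕ) (x : ℝ) : n * (2 : ℝ) ^ x ≤ 2 ^ (x + Real.logb 2 n) := by
  rcases n.eq_zero_or_pos with rfl | hn
  · simp only [Nat.cast_zero, zero_mul]; positivity
  · rw [Real.rpow_add two_pos, Real.rpow_logb two_pos (by norm_num) (by exact_mod_cast hn),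
      mul_comm]

section BitFixing

variable {n lam lam' : ℕ}

lemma isBitFixingR_unifOn_agreeOutside {k : ℝ} {J : Finset (Fin n)} (hJ : (n : ℝ) - #J ≤ k)
    (w : Fin n → Fin lam' → Bool) : IsBitFixingR k (unifOn (agreeOutside J w)) :=
  ⟨J, hJ, w, fun u => by simp [unifOn, mem_agreeOutside, card_agreeOutside]⟩

lemma IsDenseOn.sum_le_pow {δ : ℝ} {J : Finset (Fin n)} {q : (Fin n → Fin lam → Bool) → ℝ}
    (h : IsDenseOn δ J q) (t : Finset (Fin n)) (ht : t ⊆ J) (v : Fin n → Fin lam → Bool) :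
    ∑ x, (if ∀ i ∈ t, x i = v i then q x else 0) ≤ ((2 : ℝ) ^ (-((1 - δ) * lam))) ^ #t := by
  rw [← Real.rpow_natCast, ← Real.rpow_mul two_pos.le]
  convert h t ht v using 2
  ring

lemma two_pow_mul_add_two_rpow_neg (lam' : ℕ) (x : ℝ) :
    (2 : ℝ) ^ lam' * ((2 : ℝ) ^ (-x) + (2 : ℝ) ^ (-(lam' : ℝ))) = 1 + 2 ^ ((lam' : ℝ) - x) := by
  rw [← Real.rpow_natCast, mul_add, ← Real.rpow_add two_pos, ← Real.rpow_add two_pos,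
    add_neg_cancel, Real.rpow_zero, add_comm, ← sub_eq_add_neg]

theorem exists_convexCombBitFixing_near_pushforward_coordHash {H : Type*} [Fintype H] [Nonempty H]
    {k δ : ℝ} {ev : H → (Fin lam → Bool) → (Fin lam' → Bool)}
    (huniv : ∀ x y : Fin lam → Bool, x ≠ y →
      (#{g | ev g x = ev g y} : ℝ) ≤ Fintype.card H * (2 : ℝ) ^ (-(lam' : ℝ)))
    {W : (Fin n → Fin lam → Bool) → ℝ} (hW : IsConvexCombKDense k δ W) :
    ∃ V : (Fin n → H) → (Fin n → Fin lam' → Bool) → ℝ,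
      (∀ g, IsConvexCombBitFixing k (V g)) ∧ (∀ g u, 0 ≤ V g u) ∧ (∀ g, ∑ u, V g u = 1) ∧
      ∀ X, (Fintype.card (Fin n → H) : ℝ)⁻¹ * ∑ g, ∑ u, |pushforward (coordHash ev g) X u - V g u|
        ≤ ∑ x, |X x - W x| + √((1 + 2 ^ ((lam' : ℝ) - (1 - δ) * lam)) ^ n - 1) := by
  obtain ⟨m, wt, q, hwt0, hwt1, hq, hWq⟩ := hW
  choose hq0 hq1 hqk using hq
  unfold IsKDense at hqk
  choose J hJ hw hdense using hqk
  choose w hw using hw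
  refine ⟨fun g u => ∑ i, wt i * unifOn (agreeOutside (J i) (coordHash ev g (w i))) u,
    fun g => ⟨m, wt, _, hwt0, hwt1, fun i => isBitFixingR_unifOn_agreeOutside (hJ i) _,
      fun u => rfl⟩,
    fun g u => sum_nonneg fun i _ => mul_nonneg (hwt0 i) (unifOn_nonneg _ _),
    fun g => ?_, fun X => avg_sum_abs_pushforward_sub_mix_le hwt0 hwt1 hWq fun i => ?_⟩
  · rw [sum_comm]
    simp only [← mul_sum, sum_unifOn ⟨_, self_mem_agreeOutside _ _⟩, mul_one, hwt1]
  · refine (avg_sum_abs_pushforward_coordHash_sub_unifOn_le (by positivity) huniv (hq0 i) (hq1 i)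
      (hw i) fun t ht v => by convert (hdense i).sum_le_pow t ht v).trans ?_
    have hε : (0 : ℝ) ≤ 2 ^ ((lam' : ℝ) - (1 - δ) * lam) := by positivity
    rw [Fintype.card_fun, Fintype.card_bool, Fintype.card_fin, Nat.cast_pow, Nat.cast_ofNat,
      two_pow_mul_add_two_rpow_neg]
    gcongr
    · linarith
    · exact (card_le_univ _).trans_eq (Fintype.card_fin n)

end BitFixing

section Conditioning

variable {α Z : Type*} [DecidableEq Z] {F : α → Z} {p : α → ℝ} {P : Z → ℝ}
  {X : Z → α → ℝ}

lemma le_or_cond_le (hp : ∀ x, 0 ≤ p x)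
    (hX : ∀ z x, X z x = (if F x = z then p x else 0) / P z) {t : ℝ} (ht : 0 < t) (z : Z) :
    P z ≤ t ∨ (0 < P z ∧ ∀ x, X z x ≤ p x / t) := by
  refine (le_or_gt (P z) t).imp id fun h => ⟨ht.trans h, fun x => ?_⟩
  rw [hX]
  split_ifs
  · exact div_le_div_of_nonneg_left (hp x) ht h.le
  · rw [zero_div]; exact div_nonneg (hp x) ht.le

variable [Fintype α]

lemma cond_nonneg (hp : ∀ x, 0 ≤ p x) (hP : ∀ z, P z = pushforward F p z)
    (hX : ∀ z x, X z x = (if F x = z then p x else 0) / P z) (z : Z) (x : α) : 0 ≤ X z x := by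
  rw [hX, hP]
  exact div_nonneg (by split_ifs <;> simp [hp x]) (pushforward_nonneg hp z)

lemma sum_cond_eq_one (hP : ∀ z, P z = pushforward F p z)
    (hX : ∀ z x, X z x = (if F x = z then p x else 0) / P z) {z : Z} (hz : P z ≠ 0) :
    ∑ x, X z x = 1 := by
  simp only [hX, ← sum_div]
  rw [div_eq_one_iff_eq hz, hP]
  rfl

/-- Also valid where `P z = 0`, where `X z` is the junk value `0`: both sides vanish. -/
lemma sum_ite_and_eq_mul_pushforward {β : Type*} [DecidableEq β] (hp : ∀ x, 0 ≤ p x)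
    (hP : ∀ z, P z = pushforward F p z) (hX : ∀ z x, X z x = (if F x = z then p x else 0) / P z)
    (f : α → β) (z : Z) (u : β) :
    ∑ x, (if F x = z ∧ f x = u then p x else 0) = P z * pushforward f (X z) u := by
  by_cases hz : P z = 0
  · have h0 := (sum_eq_zero_iff_of_nonneg fun x _ => by split_ifs <;> simp [hp x]).mp
      ((hP z).symm.trans hz)
    rw [hz, zero_mul]
    refine sum_eq_zero fun x hx => ?_
    have := h0 x hx
    split_ifs at this ⊢ with h h' <;> simp_all
  · simp only [pushforward, mul_sum, hX, mul_ite, mul_zero, mul_div_cancel₀ _ hz, ite_and]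
    exact sum_congr rfl fun x _ => by split_ifs <;> rfl

end Conditioning

lemma half_sum_abs_mul_sub_mul {G Z U : Type*} [Fintype G] [Fintype Z] [Fintype U] {c : ℝ}
    (hc : 0 ≤ c) {P : Z → ℝ} (hP : ∀ z, 0 ≤ P z) (Q V : G → Z → U → ℝ) :
    1 / 2 * ∑ g, ∑ z, ∑ u, |c * (P z * Q g z u) - c * P z * V g z u|
      = ∑ z, P z * (1 / 2 * (c * ∑ g, ∑ u, |Q g z u - V g z u|)) := by
  have h : ∀ g z u, |c * (P z * Q g z u) - c * P z * V g z u| = c * P z * |Q g z u - V g z u| :=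
    fun g z u => by rw [← mul_assoc, ← mul_sub, abs_mul, abs_of_nonneg (mul_nonneg hc (hP z))]
  simp only [h, mul_sum]
  rw [sum_comm]
  exact sum_congr rfl fun z _ => sum_congr rfl fun g _ => sum_congr rfl fun u _ => by ring

lemma sum_mul_le_of_small_or_le {Z : Type*} [Fintype Z] {P D : Z → ℝ} {A t : ℝ}
    (hP0 : ∀ z, 0 ≤ P z) (hP1 : ∑ z, P z = 1) (hA : 0 ≤ A) (ht : 0 ≤ t)
    (hD1 : ∀ z, 0 < P z → D z ≤ 1) (hD : ∀ z, P z ≤ t ∨ D z ≤ A) :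
    ∑ z, P z * D z ≤ A + Fintype.card Z * t := by
  have hz : ∀ z, P z * D z ≤ A * P z + t := fun z => by
    rcases hD z with h | h
    · rcases (hP0 z).eq_or_lt with h0 | hpos
      · rw [← h0, zero_mul, mul_zero, zero_add]
        exact h0 ▸ h
      · exact (mul_le_of_le_one_right (hP0 z) (hD1 z hpos)).trans
          (h.trans (le_add_of_nonneg_left (mul_nonneg hA (hP0 z))))
    · rw [mul_comm A]
      exact (mul_le_mul_of_nonneg_left h (hP0 z)).trans (le_add_of_nonneg_right ht)
  calc ∑ z, P z * D z ≤ ∑ z, (A * P z + t) := sum_le_sum fun z _ => hz z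
    _ = A + Fintype.card Z * t := by
        rw [sum_add_distrib, ← mul_sum, hP1, mul_one, sum_const, card_univ, nsmul_eq_mul]

lemma avg_half_sum_abs_sub_le_one {G β : Type*} [Fintype G] [Nonempty G] [Fintype β]
    {p r : G → β → ℝ} (hp : ∀ g u, 0 ≤ p g u) (hr : ∀ g u, 0 ≤ r g u)
    (hp1 : ∀ g, ∑ u, p g u = 1) (hr1 : ∀ g, ∑ u, r g u = 1) :
    1 / 2 * ((Fintype.card G : ℝ)⁻¹ * ∑ g, ∑ u, |p g u - r g u|) ≤ 1 := by
  have hG : (0 : ℝ) < Fintype.card G := by exact_mod_cast Fintype.card_pos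
  have := sum_le_sum fun g (_ : g ∈ univ) => sum_abs_sub_le_two (hp g) (hr g) (hp1 g) (hr1 g)
  rw [sum_const, card_univ, nsmul_eq_mul] at this
  rw [inv_mul_eq_div, ← mul_div_assoc, div_le_one hG]
  linarith

lemma exists_lt_of_sum_eq_one {Z : Type*} [Fintype Z] {P : Z → ℝ} (hP1 : ∑ z, P z = 1) {t : ℝ}
    (ht : Fintype.card Z * t < 1) : ∃ z, t < P z := by
  obtain ⟨z, -, hz⟩ := exists_lt_of_sum_lt (s := univ) (f := fun _ => t) (g := P)
    (by rwa [hP1, sum_const, card_univ, nsmul_eq_mul])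
  exact ⟨z, hz⟩

lemma forall_exists_and_imp {Z Y : Type*} {p : Z → Prop} {Q : Y → Prop} {R : Z → Y → Prop}
    (h : ∀ z, p z → ∃ y, Q y ∧ R z y) (hp : ∃ z, p z) : ∀ z, ∃ y, Q y ∧ (p z → R z y) := by
  intro z
  by_cases hz : p z
  · exact (h z hz).imp fun y hy => ⟨hy.1, fun _ => hy.2⟩
  · obtain ⟨z₀, hz₀⟩ := hp
    exact (h z₀ hz₀).imp fun y hy => ⟨hy.1, fun h' => absurd h' hz⟩

lemma half_sqrt_le_of_exponent_lt {n lam lam' : ℕ} {δ : ℝ}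
    (hcond : (1 - δ) * lam > lam' + Real.logb 2 n + 1) :
    √((1 + 2 ^ ((lam' : ℝ) - (1 - δ) * lam)) ^ n - 1) / 2
      ≤ √((2 : ℝ) ^ (-(1 - δ) * lam + lam' + Real.logb 2 n)) := by
  have hn : (n : ℝ) * 2 ^ ((lam' : ℝ) - (1 - δ) * lam)
      ≤ 2 ^ (-(1 - δ) * lam + lam' + Real.logb 2 n) :=
    (natCast_mul_two_rpow_le n _).trans_eq (by congr 1; ring)
  refine (half_sqrt_one_add_pow_sub_one_le (by positivity) (hn.trans ?_)).trans
    (Real.sqrt_le_sqrt hn)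
  exact Real.rpow_le_one_of_one_le_of_nonpos one_le_two (by linarith)

lemma card_mul_two_rpow_neg (s s' : ℕ) :
    (Fintype.card (Fin s → Bool) : ℝ) * 2 ^ (-(s' : ℝ)) = 2 ^ ((s : ℝ) - s') := by
  rw [sub_eq_add_neg, Real.rpow_add two_pos, Real.rpow_natCast]
  simp

lemma inv_card_div_two_rpow_neg (n lam s' : ℕ) :
    (Fintype.card (Fin n → Fin lam → Bool) : ℝ)⁻¹ / 2 ^ (-(s' : ℝ))
      = 2 ^ ((s' : ℝ) - ((n * lam : ℕ) : ℝ)) := by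
  rw [Real.rpow_sub two_pos, Real.rpow_neg two_pos.le, Real.rpow_natCast, Real.rpow_natCast,
    div_inv_eq_mul, inv_mul_eq_div]
  simp [← pow_mul, mul_comm]

theorem stmt_19_general {n lam lam' s s' : ℕ} {H : Type*} [Fintype H] [Nonempty H]
    (δ γ k : ℝ) (hγ : 0 < γ) (hss : s < s')
    (ev : H → (Fin lam → Bool) → (Fin lam' → Bool))
    (huniv : ∀ x y : Fin lam → Bool, x ≠ y →
      ((Finset.univ.filter (fun g : H => ev g x = ev g y)).card : ℝ)
        ≤ (Fintype.card H : ℝ) * (2 : ℝ) ^ (-(lam' : ℝ)))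
    (F : (Fin n → (Fin lam → Bool)) → (Fin s → Bool))
    (Pz : (Fin s → Bool) → ℝ)
    (hPz : ∀ z, Pz z = ∑ x, if F x = z
      then ((Fintype.card (Fin n → Fin lam → Bool) : ℝ))⁻¹ else 0)
    (Xz : (Fin s → Bool) → (Fin n → (Fin lam → Bool)) → ℝ)
    (hXz : ∀ z x, Xz z x =
      (if F x = z then ((Fintype.card (Fin n → Fin lam → Bool) : ℝ))⁻¹ else 0) / Pz z)
    (hcond : (1 - δ) * lam > lam' + Real.logb 2 n + 1)
    (hdecomp : ∀ z : Fin s → Bool, 0 < Pz z →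
      (∀ x, Xz z x ≤ (2 : ℝ) ^ ((s' : ℝ) - ((n * lam : ℕ) : ℝ))) →
      ∃ W : (Fin n → (Fin lam → Bool)) → ℝ, IsConvexCombKDense k δ W ∧
        (1 / 2) * (∑ x, |Xz z x - W x|) ≤ γ) :
    ∃ V : (Fin n → H) → (Fin s → Bool) → (Fin n → (Fin lam' → Bool)) → ℝ,
      (∀ g z, IsConvexCombBitFixing k (V g z)) ∧
      (1 / 2) * ∑ g : Fin n → H, ∑ z : Fin s → Bool, ∑ u : Fin n → (Fin lam' → Bool),
          |((Fintype.card H : ℝ) ^ n)⁻¹ *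
              (∑ x, if (F x = z ∧ ∀ i, ev (g i) (x i) = u i)
                then ((Fintype.card (Fin n → Fin lam → Bool) : ℝ))⁻¹ else 0)
            - ((Fintype.card H : ℝ) ^ n)⁻¹ * Pz z * V g z u|
        ≤ Real.sqrt ((2 : ℝ) ^ (-(1 - δ) * lam + lam' + Real.logb 2 n)) + γ
          + (2 : ℝ) ^ ((s : ℝ) - (s' : ℝ)) := by
  have hp : ∀ _ : Fin n → Fin lam → Bool,
      (0 : ℝ) ≤ (Fintype.card (Fin n → Fin lam → Bool) : ℝ)⁻¹ := fun _ => by positivity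
  have hPz0 : ∀ z, 0 ≤ Pz z := fun z => (hPz z).trans_ge (pushforward_nonneg hp z)
  have hPz1 : ∑ z, Pz z = 1 := by
    rw [sum_congr rfl fun z _ => hPz z]
    refine sum_pushforward.trans ?_
    rw [sum_const, card_univ, nsmul_eq_mul, mul_inv_cancel₀ (by positivity)]
  have hsmall : ∀ z, Pz z ≤ 2 ^ (-(s' : ℝ)) ∨
      (0 < Pz z ∧ ∀ x, Xz z x ≤ 2 ^ ((s' : ℝ) - ((n * lam : ℕ) : ℝ))) := fun z => by
    simpa only [inv_card_div_two_rpow_neg] using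
      le_or_cond_le hp hXz (t := 2 ^ (-(s' : ℝ))) (by positivity) z
  obtain ⟨z₀, hz₀⟩ := exists_lt_of_sum_eq_one hPz1 (t := 2 ^ (-(s' : ℝ))) <| by
    rw [card_mul_two_rpow_neg]
    exact Real.rpow_lt_one_of_one_lt_of_neg one_lt_two (sub_neg.mpr (by exact_mod_cast hss))
  choose W hWk hWγ using forall_exists_and_imp (fun z => and_imp.mpr (hdecomp z))
    ⟨z₀, (hsmall z₀).resolve_left hz₀.not_ge⟩
  choose V hVk hV0 hV1 hVX using fun z =>
    exists_convexCombBitFixing_near_pushforward_coordHash (n := n) huniv (hWk z)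
  refine ⟨fun g z => V z g, fun g z => hVk z g, ?_⟩
  simp only [← coordHash_eq_iff, sum_ite_and_eq_mul_pushforward hp hPz hXz]
  rw [half_sum_abs_mul_sub_mul (by positivity) hPz0, ← card_mul_two_rpow_neg s s', add_comm _ γ,
    show (Fintype.card H : ℝ) ^ n = Fintype.card (Fin n → H) by simp]
  refine sum_mul_le_of_small_or_le hPz0 hPz1 (by positivity) (by positivity) (fun z hz => ?_)
    fun z => (hsmall z).imp_right fun hz => ?_
  · exact avg_half_sum_abs_sub_le_one (fun g => pushforward_nonneg (cond_nonneg hp hPz hXz z))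
      (hV0 z) (fun g => sum_pushforward.trans (sum_cond_eq_one hPz hXz hz.ne')) (hV1 z)
  · calc _ ≤ 1 / 2 * (∑ x, |Xz z x - W z x|
          + √((1 + 2 ^ ((lam' : ℝ) - (1 - δ) * lam)) ^ n - 1)) := by
          gcongr; exact hVX z (Xz z)
      _ ≤ γ + √(2 ^ (-(1 - δ) * lam + lam' + Real.logb 2 n)) := by
        linarith [hWγ z hz, half_sqrt_le_of_exponent_lt hcond]

/-- Key leakage lemma: with `X` uniform over `({0,1}^λ)^n`, leakage `Z = F(X)` of `s`
bits, hash functions `G` uniform over a universal family `𝒢^n` with range `{0,1}^λ'`,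
parameters `δ, γ > 0`, `s' > s`, `(1-δ)λ > λ' + log₂ n + 1`,
`k = (s' + log₂(1/γ))/(δλ)`, and assuming the dense-decomposition lemma as a hypothesis
(every conditioned source `X_z` with deficiency at most `s'` is `γ`-close to a convex
combination of `(k, 1-δ)`-dense sources), there exists a family `V_{G,Z}` of convex
combinations of `k`-bit-fixing `(n, 2^λ')`-sources with
`Δ[(G, Z, G(X)), (G, Z, V_{G,Z})] ≤ √(2^{-(1-δ)λ + λ' + log₂ n}) + γ + 2^{s-s'}`. -/
theorem stmt_19 {n lam lam' s s' : ℕ} {H : Type*} [Fintype H] [Nonempty H]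
    (δ γ k : ℝ) (hδ : 0 < δ) (hγ : 0 < γ) (hss : s < s')
    (hk : k = ((s' : ℝ) + Real.logb 2 (1 / γ)) / (δ * lam))
    (ev : H → (Fin lam → Bool) → (Fin lam' → Bool))
    (huniv : ∀ x y : Fin lam → Bool, x ≠ y →
      ((Finset.univ.filter (fun g : H => ev g x = ev g y)).card : ℝ)
        ≤ (Fintype.card H : ℝ) * (2 : ℝ) ^ (-(lam' : ℝ)))
    (F : (Fin n → (Fin lam → Bool)) → (Fin s → Bool))
    (Pz : (Fin s → Bool) → ℝ)
    (hPz : ∀ z, Pz z = ∑ x, if F x = z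
      then ((Fintype.card (Fin n → Fin lam → Bool) : ℝ))⁻¹ else 0)
    (Xz : (Fin s → Bool) → (Fin n → (Fin lam → Bool)) → ℝ)
    (hXz : ∀ z x, Xz z x =
      (if F x = z then ((Fintype.card (Fin n → Fin lam → Bool) : ℝ))⁻¹ else 0) / Pz z)
    (hcond : (1 - δ) * lam > lam' + Real.logb 2 n + 1)
    (hdecomp : ∀ z : Fin s → Bool, 0 < Pz z →
      (∀ x, Xz z x ≤ (2 : ℝ) ^ ((s' : ℝ) - ((n * lam : ℕ) : ℝ))) →
      ∃ W : (Fin n → (Fin lam → Bool)) → ℝ, IsConvexCombKDense k δ W ∧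
        (1 / 2) * (∑ x, |Xz z x - W x|) ≤ γ) :
    ∃ V : (Fin n → H) → (Fin s → Bool) → (Fin n → (Fin lam' → Bool)) → ℝ,
      (∀ g z, IsConvexCombBitFixing k (V g z)) ∧
      (1 / 2) * ∑ g : Fin n → H, ∑ z : Fin s → Bool, ∑ u : Fin n → (Fin lam' → Bool),
          |((Fintype.card H : ℝ) ^ n)⁻¹ *
              (∑ x, if (F x = z ∧ ∀ i, ev (g i) (x i) = u i)
                then ((Fintype.card (Fin n → Fin lam → Bool) : ℝ))⁻¹ else 0)
            - ((Fintype.card H : ℝ) ^ n)⁻¹ * Pz z * V g z u|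
        ≤ Real.sqrt ((2 : ℝ) ^ (-(1 - δ) * lam + lam' + Real.logb 2 n)) + γ
          + (2 : ℝ) ^ ((s : ℝ) - (s' : ℝ)) :=
  stmt_19_general δ γ k hγ hss ev huniv F Pz hPz Xz hXz hcond hdecomp
end
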